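/- arXiv:1509.07265 — 7 statements merged into one kernel-verified Lean document; each statement's English description precedes it below -/
import Mathlib

section
/- Let X be a Bernoulli random variable with parameter p ∈ [0,1] and let a ∈ [0,1]. Then E[exp(a(X - E[X]))] ≤ exp(p(1-p)a²(1/2 + (4e²/3)a)). -/
open MeasureTheory Real

lemma exp_cubic_bound_aux {x : ℝ} (hx : |x| ≤ 1) :
    Real.exp x ≤ 1 + x + x ^ 2 / 2 + 2 / 9 * |x| ^ 3 := by
  have h := Real.exp_bound hx (n := 3) (by norm_num)
  have hsum : ∑ m ∈ Finset.range 3, x ^ m / m.factorial = 1 + x + x ^ 2 / 2 := by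
    simp [Finset.sum_range_succ]
  rw [hsum] at h
  have h' := (abs_sub_le_iff.1 h).1
  norm_num [Nat.factorial] at h'
  nlinarith [h']

/-- Upper bound on the Laplace transform of a centered Bernoulli variable. -/
theorem bernoulli_mgf_upper {Ω : Type*} [MeasurableSpace Ω] (μ : Measure Ω)
    [IsProbabilityMeasure μ] (X : Ω → ℝ) (hX01 : ∀ ω, X ω = 0 ∨ X ω = 1)
    (hXmeas : Measurable X) (p : ℝ) (hp : p ∈ Set.Icc (0:ℝ) 1)
    (hXp : (μ {ω | X ω = 1}).toReal = p) (a : ℝ) (ha : a ∈ Set.Icc (0:ℝ) 1) :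
    ∫ ω, Real.exp (a * (X ω - p)) ∂μ ≤
      Real.exp (p * (1 - p) * a ^ 2 * (1 / 2 + 4 * Real.exp 2 / 3 * a)) := by
  obtain ⟨hp0, hp1⟩ := hp
  obtain ⟨ha0, ha1⟩ := ha
  set A : Set Ω := {ω | X ω = 1} with hA
  have hAmeas : MeasurableSet A := hXmeas (measurableSet_singleton 1)
  have hXind : X = A.indicator (fun _ => (1:ℝ)) := by
    funext ω
    rcases hX01 ω with h | h
    · have : ω ∉ A := by simp [hA, h]
      simp [Set.indicator_of_notMem this, h]
    · have : ω ∈ A := by simp [hA, h]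
      simp [Set.indicator_of_mem this, h]
  have hXint : Integrable X μ := by
    rw [hXind]; exact (integrable_const 1).indicator hAmeas
  have hXintegral : ∫ ω, X ω ∂μ = p := by
    rw [hXind, ← hXp]
    rw [integral_indicator hAmeas]
    simp
    rfl
  have key : ∫ ω, Real.exp (a * (X ω - p)) ∂μ
      = (1 - p) * Real.exp (-(a * p)) + p * Real.exp (a * (1 - p)) := by
    have hfun : ∀ ω, Real.exp (a * (X ω - p))
        = Real.exp (-(a * p))
          + (Real.exp (a * (1 - p)) - Real.exp (-(a * p))) * X ω := by
      intro ω
      rcases hX01 ω with h | h <;> rw [h] <;> ring_nf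
    calc ∫ ω, Real.exp (a * (X ω - p)) ∂μ
        = ∫ ω, (Real.exp (-(a * p))
            + (Real.exp (a * (1 - p)) - Real.exp (-(a * p))) * X ω) ∂μ :=
          integral_congr_ae (Filter.Eventually.of_forall hfun)
      _ = Real.exp (-(a * p))
            + (Real.exp (a * (1 - p)) - Real.exp (-(a * p))) * p := by
          rw [integral_add (integrable_const _) (hXint.const_mul _),
            integral_const, integral_const_mul, hXintegral]
          simp
      _ = (1 - p) * Real.exp (-(a * p)) + p * Real.exp (a * (1 - p)) := by ring
  rw [key]
  have hap0 : 0 ≤ a * p := mul_nonneg ha0 hp0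
  have haq0 : 0 ≤ a * (1 - p) := mul_nonneg ha0 (by linarith)
  have hb1 : Real.exp (-(a * p)) ≤ 1 - a * p + (a * p) ^ 2 / 2 + 2 / 9 * (a * p) ^ 3 := by
    have h := exp_cubic_bound_aux (x := -(a * p)) (by
      rw [abs_neg, abs_of_nonneg hap0]
      nlinarith)
    rw [abs_neg, abs_of_nonneg hap0] at h
    nlinarith [h]
  have hb2 : Real.exp (a * (1 - p)) ≤ 1 + a * (1 - p) + (a * (1 - p)) ^ 2 / 2
      + 2 / 9 * (a * (1 - p)) ^ 3 := by
    have h := exp_cubic_bound_aux (x := a * (1 - p)) (by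
      rw [abs_of_nonneg haq0]
      nlinarith)
    rwa [abs_of_nonneg haq0] at h
  have he2 : (1 : ℝ) ≤ Real.exp 2 := Real.one_le_exp (by norm_num)
  have hexp : 1 + p * (1 - p) * a ^ 2 * (1 / 2 + 4 * Real.exp 2 / 3 * a)
      ≤ Real.exp (p * (1 - p) * a ^ 2 * (1 / 2 + 4 * Real.exp 2 / 3 * a)) := by
    have := Real.add_one_le_exp (p * (1 - p) * a ^ 2 * (1 / 2 + 4 * Real.exp 2 / 3 * a))
    linarith
  have h1 : (1 - p) * Real.exp (-(a * p))
      ≤ (1 - p) * (1 - a * p + (a * p) ^ 2 / 2 + 2 / 9 * (a * p) ^ 3) :=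
    mul_le_mul_of_nonneg_left hb1 (by linarith)
  have h2 : p * Real.exp (a * (1 - p))
      ≤ p * (1 + a * (1 - p) + (a * (1 - p)) ^ 2 / 2 + 2 / 9 * (a * (1 - p)) ^ 3) :=
    mul_le_mul_of_nonneg_left hb2 hp0
  nlinarith [mul_nonneg (mul_nonneg hp0 (by linarith : (0:ℝ) ≤ 1 - p))
      (pow_nonneg ha0 3),
    mul_nonneg (mul_nonneg (mul_nonneg hp0 (by linarith : (0:ℝ) ≤ 1 - p))
      (pow_nonneg ha0 3)) (by linarith : (0:ℝ) ≤ Real.exp 2 - 1),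
    mul_nonneg (mul_nonneg (mul_nonneg hp0 (by linarith : (0:ℝ) ≤ 1 - p))
      (pow_nonneg ha0 3)) (mul_nonneg hp0 (by linarith : (0:ℝ) ≤ 1 - p))]
end

section
/- Let U₁, ..., U_N be i.i.d. positive integrable random variables, let V₁ ≤ ... ≤ V_N be their order statistics, and define E_N(V) = (1/N) Σ_{i=1}^{N-1} V_i V_{N-1}/(V_{N-1} + V_i). If additionally E[U₁²] < ∞, then P( (1/4)E[U₁] ≤ E_N(V) ≤ 2E[U₁] ) → 1 as N → ∞. -/
open MeasureTheory Filter ProbabilityTheory Topology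

lemma ENaux_term_bounds {u v : ℝ} (hu : 0 < u) (huv : u ≤ v) :
    u / 2 ≤ u * v / (v + u) ∧ u * v / (v + u) ≤ u := by
  have hv : 0 < v := lt_of_lt_of_le hu huv
  have hd : 0 < v + u := by linarith
  constructor
  · rw [le_div_iff₀ hd]; nlinarith
  · rw [div_le_iff₀ hd]; nlinarith

lemma ENaux_offDiag_image (N : ℕ) (u : ℕ → ℝ) :
    (fun p : ℕ × ℕ => min (u p.1) (u p.2)) '' ↑((Finset.range N).offDiag) =
      {v | ∃ i ∈ Set.Iio N, ∃ j ∈ Set.Iio N, i ≠ j ∧ v = min (u i) (u j)} := by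
  ext v
  simp only [Set.mem_image, Finset.mem_coe, Finset.mem_offDiag, Finset.mem_range,
    Set.mem_setOf_eq, Set.mem_Iio]
  constructor
  · rintro ⟨⟨i, j⟩, ⟨hi, hj, hij⟩, rfl⟩
    exact ⟨i, hi, j, hj, hij, rfl⟩
  · rintro ⟨i, hi, j, hj, hij, rfl⟩
    exact ⟨(i, j), ⟨hi, hj, hij⟩, rfl⟩

lemma ENaux_offDiag_nonempty {N : ℕ} (hN : 2 ≤ N) : ((Finset.range N).offDiag).Nonempty :=
  ⟨(0, 1), by simp only [Finset.mem_offDiag, Finset.mem_range]; omega⟩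

lemma ENaux_det {N : ℕ} (hN : 2 ≤ N) (u : ℕ → ℝ) (hu : ∀ i, 0 < u i)
    {Mv Vv : ℝ}
    (hMv : Mv = sSup ((fun i => u i) '' Set.Iio N))
    (hVv : Vv = sSup {v | ∃ i ∈ Set.Iio N, ∃ j ∈ Set.Iio N, i ≠ j ∧ v = min (u i) (u j)}) :
    (∑ i ∈ Finset.range N, u i) - Real.sqrt (∑ i ∈ Finset.range N, (u i) ^ 2) ≤
      2 * ((∑ i ∈ Finset.range N, u i * Vv / (Vv + u i)) - Mv * Vv / (Vv + Mv)) ∧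
    (∑ i ∈ Finset.range N, u i * Vv / (Vv + u i)) - Mv * Vv / (Vv + Mv) ≤
      ∑ i ∈ Finset.range N, u i := by
  have hne : (Finset.range N).Nonempty := Finset.nonempty_range_iff.2 (by omega)
  have hMv' : Mv = (Finset.range N).sup' hne u := by
    rw [hMv, Finset.sup'_eq_csSup_image, Finset.coe_range]
  have hDne := ENaux_offDiag_nonempty hN
  have hVv' : Vv = ((Finset.range N).offDiag).sup' hDne (fun p => min (u p.1) (u p.2)) := by
    rw [hVv, Finset.sup'_eq_csSup_image, ENaux_offDiag_image]
  obtain ⟨k, hk, hks⟩ := Finset.exists_mem_eq_sup' hne u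
  have hMk : Mv = u k := by rw [hMv', hks]
  have hleM : ∀ i ∈ Finset.range N, u i ≤ Mv := fun i hi => hMv' ▸ Finset.le_sup' u hi
  have hVle : ∀ i ∈ Finset.range N, i ≠ k → u i ≤ Vv := by
    intro i hi hik
    have hmem : (i, k) ∈ (Finset.range N).offDiag := by
      simp only [Finset.mem_offDiag]; exact ⟨hi, hk, hik⟩
    have := hVv' ▸ Finset.le_sup' (fun p : ℕ × ℕ => min (u p.1) (u p.2)) hmem
    have hmin : min (u i) (u k) = u i := min_eq_left (hMk ▸ hleM i hi)
    rw [hmin] at this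
    exact this
  have hVpos : 0 < Vv := by
    have hmem : ((0 : ℕ), (1 : ℕ)) ∈ (Finset.range N).offDiag := by
      simp only [Finset.mem_offDiag, Finset.mem_range]; omega
    have := hVv' ▸ Finset.le_sup' (fun p : ℕ × ℕ => min (u p.1) (u p.2)) hmem
    exact lt_of_lt_of_le (lt_min (hu 0) (hu 1)) this
  -- split off the k-th term: the sum minus the max term equals the sum over erase k
  set t : ℕ → ℝ := fun i => u i * Vv / (Vv + u i) with ht
  have hsplit : (∑ i ∈ Finset.range N, t i) - Mv * Vv / (Vv + Mv)
      = ∑ i ∈ (Finset.range N).erase k, t i := by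
    rw [hMk]
    have := Finset.add_sum_erase (Finset.range N) t hk
    have htk : t k = u k * Vv / (Vv + u k) := rfl
    linarith [this]
  have hterm : ∀ i ∈ (Finset.range N).erase k, u i / 2 ≤ t i ∧ t i ≤ u i := by
    intro i hi
    have hik : i ≠ k := Finset.ne_of_mem_erase hi
    have hiN : i ∈ Finset.range N := Finset.mem_of_mem_erase hi
    exact ENaux_term_bounds (hu i) (hVle i hiN hik)
  have hup : ∑ i ∈ (Finset.range N).erase k, t i ≤ ∑ i ∈ Finset.range N, u i := by
    calc ∑ i ∈ (Finset.range N).erase k, t i ≤ ∑ i ∈ (Finset.range N).erase k, u i :=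
          Finset.sum_le_sum fun i hi => (hterm i hi).2
      _ ≤ ∑ i ∈ Finset.range N, u i :=
          Finset.sum_le_sum_of_subset_of_nonneg (Finset.erase_subset _ _)
            (fun i hi _ => (hu i).le)
  have hlow : (∑ i ∈ Finset.range N, u i) - u k ≤
      2 * ∑ i ∈ (Finset.range N).erase k, t i := by
    have h1 : ∑ i ∈ (Finset.range N).erase k, u i / 2 ≤ ∑ i ∈ (Finset.range N).erase k, t i :=
      Finset.sum_le_sum fun i hi => (hterm i hi).1
    have h2 : ∑ i ∈ (Finset.range N).erase k, u i = (∑ i ∈ Finset.range N, u i) - u k :=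
      Finset.sum_erase_eq_sub hk
    have h3 : ∑ i ∈ (Finset.range N).erase k, u i / 2
        = (∑ i ∈ (Finset.range N).erase k, u i) / 2 := by
      rw [Finset.sum_div]
    rw [h3, h2] at h1
    linarith
  have hMsqrt : u k ≤ Real.sqrt (∑ i ∈ Finset.range N, (u i) ^ 2) := by
    have h1 : (u k) ^ 2 ≤ ∑ i ∈ Finset.range N, (u i) ^ 2 :=
      Finset.single_le_sum (fun i _ => sq_nonneg (u i)) hk
    calc u k = Real.sqrt ((u k) ^ 2) := (Real.sqrt_sq (hu k).le).symm
      _ ≤ Real.sqrt (∑ i ∈ Finset.range N, (u i) ^ 2) := Real.sqrt_le_sqrt h1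
  constructor
  · rw [hsplit]; linarith
  · rw [hsplit]; exact hup
open MeasureTheory Filter ProbabilityTheory Topology


/-- The normalized sum `E_N(V) = (1/N) Σ_{i=1}^{N-1} V_i V_{N-1}/(V_{N-1}+V_i)`
(over the order statistics, i.e. over all values except the largest one) lies in
`[E[U]/4, 2E[U]]` with probability tending to `1`.  Using the multiset equality
`{V_1,…,V_N} = {U_1,…,U_N}`, the sum over the `N-1` smallest order statistics is
written as the sum over all the `U_i` minus the term of the maximum `V_N`. -/
theorem E_N_concentration {Ω : Type*} [MeasurableSpace Ω] (μ : Measure Ω)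
    [IsProbabilityMeasure μ] (U : ℕ → Ω → ℝ) (hmeas : ∀ i, Measurable (U i))
    (hindep : iIndepFun U μ)
    (hident : ∀ i, μ.map (U i) = μ.map (U 0))
    (hpos : ∀ i, ∀ᵐ ω ∂μ, 0 < U i ω)
    (hU1 : Integrable (U 0) μ)
    (hU2 : Integrable (fun ω => (U 0 ω) ^ 2) μ)
    (M V2 : ℕ → Ω → ℝ)
    -- `M N` is the largest and `V2 N` the second largest among `U 0, …, U (N-1)`
    (hM : ∀ N ω, M N ω = sSup ((fun i => U i ω) '' Set.Iio N))
    (hV2 : ∀ N ω, V2 N ω =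
      sSup {v | ∃ i ∈ Set.Iio N, ∃ j ∈ Set.Iio N, i ≠ j ∧ v = min (U i ω) (U j ω)})
    (E : ℕ → Ω → ℝ)
    (hE : ∀ N ω, E N ω = (1 / N) *
      ((∑ i ∈ Finset.range N, U i ω * V2 N ω / (V2 N ω + U i ω))
        - M N ω * V2 N ω / (V2 N ω + M N ω))) :
    Tendsto (fun N : ℕ =>
        (μ {ω | (1 / 4) * (∫ x, U 0 x ∂μ) ≤ E N ω ∧ E N ω ≤ 2 * ∫ x, U 0 x ∂μ}).toReal)
      atTop (nhds 1) := by
  set m : ℝ := ∫ x, U 0 x ∂μ with hmdef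
  -- positivity of the mean
  have hU0nonneg : 0 ≤ᵐ[μ] U 0 := (hpos 0).mono fun ω h => h.le
  have hm0 : 0 < m := by
    have hsupp : μ (Function.support (U 0)) = 1 := by
      have hmeas_supp : MeasurableSet (Function.support (U 0)) :=
        (hmeas 0) (measurableSet_singleton (0 : ℝ)).compl
      have hnull : μ (Function.support (U 0))ᶜ = 0 := by
        refine measure_mono_null ?_ (ae_iff.1 (hpos 0))
        intro ω hω
        simp only [Set.mem_compl_iff, Function.mem_support, not_not] at hω
        simp [hω]
      have := measure_add_measure_compl hmeas_supp (μ := μ)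
      rw [hnull, add_zero, measure_univ] at this
      exact this
    refine (integral_pos_iff_support_of_nonneg_ae hU0nonneg hU1).2 ?_
    rw [hsupp]; norm_num
  -- identical distribution
  have hid : ∀ i, IdentDistrib (U i) (U 0) μ μ :=
    fun i => ⟨(hmeas i).aemeasurable, (hmeas 0).aemeasurable, hident i⟩
  -- strong law for the U's
  have hSLLN : ∀ᵐ ω ∂μ, Tendsto (fun n : ℕ => (∑ i ∈ Finset.range n, U i ω) / n)
      atTop (𝓝 m) :=
    strong_law_ae_real U hU1 (fun i j hij => hindep.indepFun hij) hid
  -- strong law for the squares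
  have hsq : Measurable fun x : ℝ => x ^ 2 := measurable_id.pow_const 2
  set m2 : ℝ := ∫ x, (U 0 x) ^ 2 ∂μ with hm2def
  have hSLLN2 : ∀ᵐ ω ∂μ, Tendsto (fun n : ℕ => (∑ i ∈ Finset.range n, (U i ω) ^ 2) / n)
      atTop (𝓝 m2) := by
    have := strong_law_ae_real (fun i ω => (U i ω) ^ 2) hU2
      (fun i j hij => (hindep.indepFun hij).comp hsq hsq)
      (fun i => (hid i).comp hsq)
    exact this
  have hposall : ∀ᵐ ω ∂μ, ∀ i, 0 < U i ω := ae_all_iff.2 hpos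
  -- the events
  set A : ℕ → Set Ω := fun N => {ω | (1 / 4) * m ≤ E N ω ∧ E N ω ≤ 2 * m} with hA
  -- measurability of the events
  have hMmeas : ∀ N, Measurable (M N) := by
    intro N
    rcases Nat.eq_zero_or_pos N with rfl | hNpos
    · have : M 0 = fun _ => (0 : ℝ) := by
        funext ω
        rw [hM]
        have : Set.Iio (0 : ℕ) = ∅ := by ext i; simp
        rw [this, Set.image_empty, Real.sSup_empty]
      rw [this]; exact measurable_const
    · have hne : (Finset.range N).Nonempty := Finset.nonempty_range_iff.2 hNpos.ne'
      have : M N = (Finset.range N).sup' hne U := by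
        funext ω
        rw [hM, Finset.sup'_apply, Finset.sup'_eq_csSup_image, Finset.coe_range]
      rw [this]
      exact Finset.measurable_sup' hne fun i _ => hmeas i
  have hVmeas : ∀ N, Measurable (V2 N) := by
    intro N
    rcases lt_or_ge N 2 with hN | hN
    · have : V2 N = fun _ => (0 : ℝ) := by
        funext ω
        rw [hV2]
        have : {v | ∃ i ∈ Set.Iio N, ∃ j ∈ Set.Iio N, i ≠ j ∧ v = min (U i ω) (U j ω)}
            = ∅ := by
          ext v
          simp only [Set.mem_setOf_eq, Set.mem_Iio, Set.mem_empty_iff_false, iff_false]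
          rintro ⟨i, hi, j, hj, hij, -⟩
          omega
        rw [this, Real.sSup_empty]
      rw [this]; exact measurable_const
    · have hDne := ENaux_offDiag_nonempty (N := N) hN
      have : V2 N = ((Finset.range N).offDiag).sup' hDne
          (fun p ω => min (U p.1 ω) (U p.2 ω)) := by
        funext ω
        rw [hV2, Finset.sup'_apply, Finset.sup'_eq_csSup_image,
          ENaux_offDiag_image N (fun i => U i ω)]
      rw [this]
      exact Finset.measurable_sup' hDne fun p _ => (hmeas p.1).min (hmeas p.2)
  have hEmeas : ∀ N, Measurable (E N) := by
    intro N
    have : E N = fun ω => (1 / (N : ℝ)) *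
        ((∑ i ∈ Finset.range N, U i ω * V2 N ω / (V2 N ω + U i ω))
          - M N ω * V2 N ω / (V2 N ω + M N ω)) := funext fun ω => hE N ω
    rw [this]
    refine Measurable.const_mul (Measurable.sub ?_ ?_) _
    · exact Finset.measurable_sum _ fun i _ =>
        ((hmeas i).mul (hVmeas N)).div ((hVmeas N).add (hmeas i))
    · exact ((hMmeas N).mul (hVmeas N)).div ((hVmeas N).add (hMmeas N))
  have hAmeas : ∀ N, MeasurableSet (A N) := by
    intro N
    have : A N = E N ⁻¹' Set.Icc ((1 / 4) * m) (2 * m) := rfl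
    rw [this]
    exact (hEmeas N) measurableSet_Icc
  -- a.e. eventual membership
  have h_lim : ∀ᵐ ω ∂μ, ∀ᶠ N : ℕ in atTop, ω ∈ A N ↔ ω ∈ (Set.univ : Set Ω) := by
    filter_upwards [hposall, hSLLN, hSLLN2] with ω hω hS hQ
    simp only [Set.mem_univ, iff_true]
    -- limits of the auxiliary sequences
    have hq : Tendsto (fun N : ℕ => Real.sqrt (∑ i ∈ Finset.range N, (U i ω) ^ 2) / N)
        atTop (𝓝 0) := by
      have h1 : Tendsto (fun N : ℕ =>
          ((∑ i ∈ Finset.range N, (U i ω) ^ 2) / N) * (1 / (N : ℝ))) atTop (𝓝 (m2 * 0)) :=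
        hQ.mul tendsto_one_div_atTop_nhds_zero_nat
      rw [mul_zero] at h1
      have h2 := (Real.continuous_sqrt.tendsto 0).comp h1
      rw [Real.sqrt_zero] at h2
      refine h2.congr fun N => ?_
      show Real.sqrt ((∑ i ∈ Finset.range N, (U i ω) ^ 2) / N * (1 / (N : ℝ)))
        = Real.sqrt (∑ i ∈ Finset.range N, (U i ω) ^ 2) / N
      have hQnn : 0 ≤ ∑ i ∈ Finset.range N, (U i ω) ^ 2 :=
        Finset.sum_nonneg fun i _ => sq_nonneg _
      have hNnn : (0 : ℝ) ≤ (N : ℝ) := Nat.cast_nonneg N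
      rw [show (∑ i ∈ Finset.range N, (U i ω) ^ 2) / N * (1 / (N : ℝ))
          = (∑ i ∈ Finset.range N, (U i ω) ^ 2) / (N : ℝ) ^ 2 by ring,
        Real.sqrt_div hQnn, Real.sqrt_sq hNnn]
    have e1 : ∀ᶠ N : ℕ in atTop, (3 / 4) * m < (∑ i ∈ Finset.range N, U i ω) / N :=
      hS.eventually (eventually_gt_nhds (by linarith))
    have e2 : ∀ᶠ N : ℕ in atTop, (∑ i ∈ Finset.range N, U i ω) / N < 2 * m :=
      hS.eventually (eventually_lt_nhds (by linarith))
    have e3 : ∀ᶠ N : ℕ in atTop,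
        Real.sqrt (∑ i ∈ Finset.range N, (U i ω) ^ 2) / N < (1 / 4) * m :=
      hq.eventually (eventually_lt_nhds (by linarith))
    filter_upwards [e1, e2, e3, eventually_ge_atTop 2] with N h1 h2 h3 hN2
    have hNpos : (0 : ℝ) < (N : ℝ) := by exact_mod_cast (by omega : 0 < N)
    obtain ⟨hdl, hdu⟩ := ENaux_det hN2 (fun i => U i ω) hω (hM N ω) (hV2 N ω)
    set S : ℝ := ∑ i ∈ Finset.range N, U i ω with hSdef
    set Q : ℝ := Real.sqrt (∑ i ∈ Finset.range N, (U i ω) ^ 2) with hQdef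
    set mid : ℝ := (∑ i ∈ Finset.range N, U i ω * V2 N ω / (V2 N ω + U i ω))
      - M N ω * V2 N ω / (V2 N ω + M N ω) with hmiddef
    have hEval : E N ω = (1 / (N : ℝ)) * mid := hE N ω
    constructor
    · -- lower bound
      rw [hEval]
      have key : (1 / (N : ℝ)) * (S - Q) ≤ (1 / (N : ℝ)) * (2 * mid) :=
        mul_le_mul_of_nonneg_left (by linarith) (by positivity)
      have hrw1 : (1 / (N : ℝ)) * (S - Q) = S / N - Q / N := by ring
      have hrw2 : (1 / (N : ℝ)) * (2 * mid) = 2 * ((1 / (N : ℝ)) * mid) := by ring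
      rw [hrw1, hrw2] at key
      linarith
    · -- upper bound
      rw [hEval]
      have key : (1 / (N : ℝ)) * mid ≤ (1 / (N : ℝ)) * S := by
        apply mul_le_mul_of_nonneg_left hdu (by positivity)
      have hrw : (1 / (N : ℝ)) * S = S / N := by ring
      rw [hrw] at key
      linarith
  -- conclude
  have hmeasconv : Tendsto (fun N => μ (A N)) atTop (𝓝 (μ (Set.univ : Set Ω))) :=
    tendsto_measure_of_ae_tendsto_indicator_of_isFiniteMeasure atTop MeasurableSet.univ
      hAmeas h_lim
  rw [measure_univ] at hmeasconv
  have htr : Tendsto (fun N => (μ (A N)).toReal) atTop (𝓝 ((1 : ENNReal)).toReal) :=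
    (ENNReal.tendsto_toReal (by simp : (1 : ENNReal) ≠ ⊤)).comp hmeasconv
  rw [ENNReal.toReal_one] at htr
  exact htr
end

section
/- Fix strengths v₁, ..., v_N > 0 and let (X_{i,j})_{1≤i<j≤N} be independent Bernoulli random variables with P(X_{i,j}=1) = v_i/(v_i+v_j), X_{j,i} = 1 − X_{i,j}, and scores S_i = Σ_{j≠i} X_{i,j}. Let Z_N = max_{1≤i≤N} S_i. Then for every real a, P(Z_N ≤ a) ≤ Π_{i=1}^{N} P(S_i ≤ a), i.e., Z_N stochastically dominates the maximum of independent copies of the S_i. -/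
open MeasureTheory Filter ProbabilityTheory Finset

section BTaux

variable {α : Type*} [DecidableEq α]

/-- Expectation of `F` under the product Bernoulli measure with weights `w` on coordinates `u`. -/
noncomputable def BTE (w : α → ℝ) (u : Finset α) (F : Finset α → ℝ) : ℝ :=
  ∑ s ∈ u.powerset, ((∏ p ∈ s, w p) * ∏ p ∈ u \ s, (1 - w p)) * F s

lemma BTE_empty (w : α → ℝ) (F : Finset α → ℝ) : BTE w ∅ F = F ∅ := by
  simp [BTE]

lemma BTE_insert (w : α → ℝ) {p : α} {u : Finset α} (hp : p ∉ u) (F : Finset α → ℝ) :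
    BTE w (insert p u) F
      = (1 - w p) * BTE w u F + w p * BTE w u (fun s => F (insert p s)) := by
  rw [BTE, Finset.sum_powerset_insert hp]
  simp only [BTE, Finset.mul_sum]
  congr 1
  · apply Finset.sum_congr rfl
    intro t ht
    rw [Finset.mem_powerset] at ht
    have hpt : p ∉ t := fun h => hp (ht h)
    rw [Finset.insert_sdiff_of_notMem _ hpt, Finset.prod_insert (by simp [hp])]
    ring
  · apply Finset.sum_congr rfl
    intro t ht
    rw [Finset.mem_powerset] at ht
    have hpt : p ∉ t := fun h => hp (ht h)
    have h1 : insert p u \ insert p t = u \ t := by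
      rw [Finset.insert_sdiff_insert, Finset.sdiff_insert_of_notMem hp]
    rw [h1, Finset.prod_insert hpt]
    ring

lemma BTE_nonneg {w : α → ℝ} (hw0 : ∀ p, 0 ≤ w p) (hw1 : ∀ p, w p ≤ 1) {u : Finset α}
    {F : Finset α → ℝ} (hF : ∀ s, 0 ≤ F s) : 0 ≤ BTE w u F := by
  refine Finset.sum_nonneg fun s _ => ?_
  refine mul_nonneg (mul_nonneg ?_ ?_) (hF s)
  · exact Finset.prod_nonneg fun p _ => hw0 p
  · exact Finset.prod_nonneg fun p _ => by linarith [hw1 p]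

lemma BTE_mono {w : α → ℝ} (hw0 : ∀ p, 0 ≤ w p) (hw1 : ∀ p, w p ≤ 1) {u : Finset α}
    {F G : Finset α → ℝ} (h : ∀ s, F s ≤ G s) : BTE w u F ≤ BTE w u G := by
  refine Finset.sum_le_sum fun s _ => ?_
  have : (0:ℝ) ≤ (∏ p ∈ s, w p) * ∏ p ∈ u \ s, (1 - w p) :=
    mul_nonneg (Finset.prod_nonneg fun p _ => hw0 p)
      (Finset.prod_nonneg fun p _ => by linarith [hw1 p])
  exact mul_le_mul_of_nonneg_left (h s) this

/-- One expectation: total mass is 1. -/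
lemma BTE_one (w : α → ℝ) (u : Finset α) : BTE w u (fun _ => (1:ℝ)) = 1 := by
  classical
  induction u using Finset.induction_on with
  | empty => simp [BTE_empty]
  | @insert p u hp ih => rw [BTE_insert w hp]; rw [ih]; ring

/-- Negative Harris inequality for product Bernoulli measures. -/
lemma BTE_neg_corr {w : α → ℝ} (hw0 : ∀ p, 0 ≤ w p) (hw1 : ∀ p, w p ≤ 1) (u : Finset α) :
    ∀ F G : Finset α → ℝ,
    (∀ p ∈ u, ((∀ s, F s ≤ F (insert p s)) ∧ (∀ s, G (insert p s) ≤ G s))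
      ∨ (∀ s, F (insert p s) = F s) ∨ (∀ s, G (insert p s) = G s)) →
    BTE w u (fun s => F s * G s) ≤ BTE w u F * BTE w u G := by
  classical
  induction u using Finset.induction_on with
  | empty => intro F G _; simp [BTE_empty]
  | @insert p u hp ih =>
    intro F G hcond
    rw [BTE_insert w hp, BTE_insert w hp F, BTE_insert w hp G]
    set A0 := BTE w u F with hA0
    set A1 := BTE w u (fun s => F (insert p s)) with hA1
    set B0 := BTE w u G with hB0
    set B1 := BTE w u (fun s => G (insert p s)) with hB1
    have hq : ∀ q ∈ u, q ∈ insert p u := fun q hq => Finset.mem_insert_of_mem hq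
    -- transfer conditions to shifted functions
    have hcond1 : ∀ q ∈ u, ((∀ s, F (insert p s) ≤ F (insert p (insert q s)))
        ∧ (∀ s, G (insert p (insert q s)) ≤ G (insert p s)))
        ∨ (∀ s, F (insert p (insert q s)) = F (insert p s))
        ∨ (∀ s, G (insert p (insert q s)) = G (insert p s)) := by
      intro q hqu
      rcases hcond q (hq q hqu) with ⟨h1, h2⟩ | h | h
      · exact Or.inl ⟨fun s => by rw [Finset.insert_comm]; exact h1 _,
          fun s => by rw [Finset.insert_comm]; exact h2 _⟩
      · exact Or.inr (Or.inl fun s => by rw [Finset.insert_comm]; exact h _)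
      · exact Or.inr (Or.inr fun s => by rw [Finset.insert_comm]; exact h _)
    have hX0 : BTE w u (fun s => F s * G s) ≤ A0 * B0 :=
      ih F G (fun q hqu => hcond q (hq q hqu))
    have hX1 : BTE w u (fun s => F (insert p s) * G (insert p s)) ≤ A1 * B1 := by
      have := ih (fun s => F (insert p s)) (fun s => G (insert p s))
        (by intro q hqu; exact hcond1 q hqu)
      exact this
    have hw0p := hw0 p
    have hw1p := hw1 p
    have e0 : (1 - w p) * BTE w u (fun s => F s * G s) ≤ (1 - w p) * (A0 * B0) :=
      mul_le_mul_of_nonneg_left hX0 (by linarith)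
    have e1 : w p * BTE w u (fun s => F (insert p s) * G (insert p s)) ≤ w p * (A1 * B1) :=
      mul_le_mul_of_nonneg_left hX1 hw0p
    rcases hcond p (Finset.mem_insert_self p u) with ⟨h1, h2⟩ | h | h
    · have hA : A0 ≤ A1 := BTE_mono hw0 hw1 fun s => h1 s
      have hB : B1 ≤ B0 := BTE_mono hw0 hw1 fun s => h2 s
      nlinarith [mul_nonneg (mul_nonneg hw0p (by linarith : (0:ℝ) ≤ 1 - w p))
        (mul_nonneg (by linarith : (0:ℝ) ≤ A1 - A0) (by linarith : (0:ℝ) ≤ B0 - B1))]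
    · have hA : A1 = A0 := by
        rw [hA1, hA0]; exact Finset.sum_congr rfl fun s _ => by simp only [h s]
      rw [hA] at e1 ⊢; nlinarith [e0, e1]
    · have hB : B1 = B0 := by
        rw [hB1, hB0]; exact Finset.sum_congr rfl fun s _ => by simp only [h s]
      rw [hB] at e1 ⊢; nlinarith [e0, e1]

/-- Main combinatorial inequality: product of score indicators vs product of expectations. -/
lemma BTE_main {α : Type*} [Fintype α] [DecidableEq α] {w : α → ℝ}
    (hw0 : ∀ p, 0 ≤ w p) (hw1 : ∀ p, w p ≤ 1)
    {N : ℕ} (lo hi : α → Fin N) (hlohi : ∀ p, lo p < hi p)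
    (f : Fin N → Finset α → ℝ) (hf0 : ∀ i s, 0 ≤ f i s)
    (hconst : ∀ i p s, i ≠ lo p → i ≠ hi p → f i (insert p s) = f i s)
    (hinc : ∀ p s, f (hi p) s ≤ f (hi p) (insert p s))
    (hdec : ∀ p s, f (lo p) (insert p s) ≤ f (lo p) s)
    (K : Finset (Fin N)) :
    BTE w Finset.univ (fun s => ∏ i ∈ K, f i s) ≤ ∏ i ∈ K, BTE w Finset.univ (f i) := by
  induction K using Finset.strongInductionOn with
  | _ K ih =>
    rcases K.eq_empty_or_nonempty with rfl | hK
    · simp [BTE_one]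
    · set k := K.max' hK with hk
      have hkK : k ∈ K := K.max'_mem hK
      have hmax : ∀ i ∈ K, i ≤ k := fun i hi => K.le_max' i hi
      set G : Finset α → ℝ := fun s => ∏ i ∈ K.erase k, f i s with hG
      have hsplit : ∀ s, (∏ i ∈ K, f i s) = f k s * G s := by
        intro s; rw [hG]; exact (Finset.mul_prod_erase K (fun i => f i s) hkK).symm
      have hcond : ∀ p ∈ (Finset.univ : Finset α),
          ((∀ s, f k s ≤ f k (insert p s)) ∧ (∀ s, G (insert p s) ≤ G s))
          ∨ (∀ s, f k (insert p s) = f k s) ∨ (∀ s, G (insert p s) = G s) := by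
        intro p _
        by_cases hklo : k = lo p
        · -- hi p > k is outside K, so G is constant in p
          refine Or.inr (Or.inr fun s => ?_)
          refine Finset.prod_congr rfl fun i hiK => ?_
          have hik : i ∈ K := Finset.mem_of_mem_erase hiK
          have hine : i ≠ k := Finset.ne_of_mem_erase hiK
          refine hconst i p s (fun h => hine (h.trans hklo.symm)) (fun h => ?_)
          have := hmax i hik
          rw [hklo] at this
          exact absurd (h ▸ this) (not_le.mpr (hlohi p))
        · by_cases hkhi : k = hi p
          · refine Or.inl ⟨fun s => hkhi ▸ hinc p s, fun s => ?_⟩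
            refine Finset.prod_le_prod (fun i _ => hf0 i _) fun i hiK => ?_
            have hine : i ≠ k := Finset.ne_of_mem_erase hiK
            by_cases hilo : i = lo p
            · exact hilo ▸ hdec p s
            · have hihi : i ≠ hi p := fun h => hine (h.trans hkhi.symm)
              exact le_of_eq (hconst i p s hilo hihi)
          · exact Or.inr (Or.inl fun s => hconst k p s hklo hkhi)
      calc BTE w Finset.univ (fun s => ∏ i ∈ K, f i s)
          = BTE w Finset.univ (fun s => f k s * G s) := by
            exact Finset.sum_congr rfl fun s _ => by simp only [hsplit s]
        _ ≤ BTE w Finset.univ (f k) * BTE w Finset.univ G :=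
            BTE_neg_corr hw0 hw1 Finset.univ (f k) G hcond
        _ ≤ BTE w Finset.univ (f k) * ∏ i ∈ K.erase k, BTE w Finset.univ (f i) := by
            refine mul_le_mul_of_nonneg_left ?_ (BTE_nonneg hw0 hw1 (hf0 k))
            exact ih (K.erase k) (Finset.erase_ssubset hkK)
        _ = ∏ i ∈ K, BTE w Finset.univ (f i) :=
            Finset.mul_prod_erase K (fun i => BTE w Finset.univ (f i)) hkK

section BTscore

variable {N : ℕ}

/-- Value of match result `X i j` as read off from a configuration of the oriented matches. -/
noncomputable def BTxval (i j : Fin N) (s : Finset {p : Fin N × Fin N // p.1 < p.2}) : ℝ :=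
  if h : i < j then (if (⟨(i, j), h⟩ : {p : Fin N × Fin N // p.1 < p.2}) ∈ s then 1 else 0)
  else if h' : j < i then
    1 - (if (⟨(j, i), h'⟩ : {p : Fin N × Fin N // p.1 < p.2}) ∈ s then 1 else 0)
  else 0

/-- Score of player `i` as read off from a configuration. -/
noncomputable def BTscore (i : Fin N) (s : Finset {p : Fin N × Fin N // p.1 < p.2}) : ℝ :=
  ∑ j ∈ Finset.univ.erase i, BTxval i j s

lemma BTxval_insert_ne (i j : Fin N) (p : {p : Fin N × Fin N // p.1 < p.2})
    (s : Finset {p : Fin N × Fin N // p.1 < p.2}) (h1 : p.1 ≠ (i, j)) (h2 : p.1 ≠ (j, i)) :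
    BTxval i j (insert p s) = BTxval i j s := by
  have key : ∀ (q : {p : Fin N × Fin N // p.1 < p.2}), q.1 ≠ p.1 →
      (q ∈ insert p s ↔ q ∈ s) := by
    intro q hq
    rw [Finset.mem_insert]
    simp [show q ≠ p from fun h => hq (congrArg Subtype.val h)]
  by_cases h : i < j
  · simp only [BTxval, dif_pos h, key ⟨(i, j), h⟩ (Ne.symm h1)]
  · by_cases h' : j < i
    · simp only [BTxval, dif_neg h, dif_pos h', key ⟨(j, i), h'⟩ (Ne.symm h2)]
    · simp [BTxval, dif_neg h, dif_neg h']

lemma BTscore_insert_ne (i : Fin N) (p : {p : Fin N × Fin N // p.1 < p.2})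
    (s : Finset {p : Fin N × Fin N // p.1 < p.2}) (h1 : i ≠ p.1.1) (h2 : i ≠ p.1.2) :
    BTscore i (insert p s) = BTscore i s := by
  refine Finset.sum_congr rfl fun j _ => ?_
  refine BTxval_insert_ne i j p s (fun h => h1 (congrArg Prod.fst h).symm)
    (fun h => h2 (congrArg Prod.snd h).symm)

lemma BTscore_hi (p : {p : Fin N × Fin N // p.1 < p.2})
    (s : Finset {p : Fin N × Fin N // p.1 < p.2}) :
    BTscore p.1.2 (insert p s) ≤ BTscore p.1.2 s := by
  refine Finset.sum_le_sum fun j hj => ?_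
  have hji : j ≠ p.1.2 := Finset.ne_of_mem_erase hj
  by_cases hjlo : j = p.1.1
  · subst hjlo
    have hnlt : ¬ p.1.2 < p.1.1 := not_lt.mpr (le_of_lt p.2)
    have hpp : (⟨(p.1.1, p.1.2), p.2⟩ : {p : Fin N × Fin N // p.1 < p.2}) = p :=
      Subtype.ext (by simp)
    simp only [BTxval, dif_neg hnlt, dif_pos p.2, hpp]
    rw [if_pos (Finset.mem_insert_self p s)]
    split_ifs <;> norm_num
  · refine le_of_eq (BTxval_insert_ne _ _ _ _ ?_ ?_)
    · intro h
      exact absurd p.2 (by rw [show p.1.1 = p.1.2 from congrArg Prod.fst h]; exact lt_irrefl _)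
    · exact fun h => hjlo (congrArg Prod.fst h).symm

lemma BTscore_lo (p : {p : Fin N × Fin N // p.1 < p.2})
    (s : Finset {p : Fin N × Fin N // p.1 < p.2}) :
    BTscore p.1.1 s ≤ BTscore p.1.1 (insert p s) := by
  refine Finset.sum_le_sum fun j hj => ?_
  have hji : j ≠ p.1.1 := Finset.ne_of_mem_erase hj
  by_cases hjhi : j = p.1.2
  · subst hjhi
    have hpp : (⟨(p.1.1, p.1.2), p.2⟩ : {p : Fin N × Fin N // p.1 < p.2}) = p :=
      Subtype.ext (by simp)
    simp only [BTxval, dif_pos p.2, hpp]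
    rw [if_pos (Finset.mem_insert_self p s)]
    split_ifs <;> norm_num
  · refine ge_of_eq (BTxval_insert_ne _ _ _ _ ?_ ?_)
    · exact fun h => hjhi (congrArg Prod.snd h).symm
    · intro h
      exact absurd p.2 (by rw [show p.1.2 = p.1.1 from congrArg Prod.snd h]; exact lt_irrefl _)

end BTscore

end BTaux

set_option maxHeartbeats 1000000

noncomputable def BTw {N : ℕ} (v : Fin N → ℝ) (p : {p : Fin N × Fin N // p.1 < p.2}) : ℝ :=
  v p.1.1 / (v p.1.1 + v p.1.2)

/-- In a Bradley–Terry round-robin tournament, the maximal score stochastically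
dominates the maximum of independent copies of the scores:
`P(Z_N ≤ a) ≤ Π_i P(S_i ≤ a)`. -/
theorem max_score_dominates_indep_max {Ω : Type*} [MeasurableSpace Ω] (μ : Measure Ω)
    [IsProbabilityMeasure μ] {N : ℕ} [NeZero N] (v : Fin N → ℝ) (hv : ∀ i, 0 < v i)
    (X : Fin N → Fin N → Ω → ℝ) (hmeas : ∀ i j, Measurable (X i j))
    (h01 : ∀ i j ω, i ≠ j → X i j ω = 0 ∨ X i j ω = 1)
    (hanti : ∀ i j ω, i ≠ j → X j i ω = 1 - X i j ω)
    (hlaw : ∀ i j : Fin N, i < j → (μ {ω | X i j ω = 1}).toReal = v i / (v i + v j))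
    (hindep : iIndepFun
      (fun p : {p : Fin N × Fin N // p.1 < p.2} => X p.1.1 p.1.2) μ)
    (S : Fin N → Ω → ℝ) (hS : ∀ i ω, S i ω = ∑ j ∈ univ.erase i, X i j ω)
    (Z : Ω → ℝ) (hZ : ∀ ω, Z ω = univ.sup' univ_nonempty (fun i => S i ω)) (a : ℝ) :
    (μ {ω | Z ω ≤ a}).toReal ≤ ∏ i : Fin N, (μ {ω | S i ω ≤ a}).toReal := by
  classical
  have hw0 : ∀ p, 0 ≤ BTw v p := fun p =>
    div_nonneg (hv _).le (by linarith [hv p.1.1, hv p.1.2])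
  have hw1 : ∀ p, BTw v p ≤ 1 := fun p =>
    div_le_one_of_le₀ (by linarith [hv p.1.2]) (by linarith [hv p.1.1, hv p.1.2])
  set c : Ω → Finset {p : Fin N × Fin N // p.1 < p.2} :=
    fun ω => Finset.univ.filter (fun p => X p.1.1 p.1.2 ω = 1) with hcdef
  have hc : ∀ (p : {p : Fin N × Fin N // p.1 < p.2}) ω, p ∈ c ω ↔ X p.1.1 p.1.2 ω = 1 :=
    fun p ω => by simp [hcdef]
  have hne : ∀ p : {p : Fin N × Fin N // p.1 < p.2}, p.1.1 ≠ p.1.2 := fun p => ne_of_lt p.2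
  -- X values are read off from the configuration
  have hxc : ∀ i j ω, i ≠ j → X i j ω = BTxval i j (c ω) := by
    intro i j ω hij
    rcases lt_trichotomy i j with h | h | h
    · simp only [BTxval, dif_pos h]
      rcases h01 i j ω hij with h0 | h1
      · rw [if_neg, h0]
        rw [hc]; rw [h0]; norm_num
      · rw [if_pos, h1]
        rw [hc]; exact h1
    · exact absurd h hij
    · have hXji := hanti j i ω (ne_of_lt h)
      simp only [BTxval, dif_neg (not_lt.mpr h.le), dif_pos h]
      rcases h01 j i ω (ne_of_lt h) with h0 | h1
      · rw [if_neg, hXji, h0]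
        rw [hc]; rw [h0]; norm_num
      · rw [if_pos, hXji, h1]
        rw [hc]; exact h1
  have hSc : ∀ i ω, S i ω = BTscore i (c ω) := by
    intro i ω
    rw [hS]
    exact Finset.sum_congr rfl fun j hj => hxc i j ω (Finset.ne_of_mem_erase hj).symm
  -- atoms of the configuration
  have hsetatom : ∀ s : Finset {p : Fin N × Fin N // p.1 < p.2},
      {ω | c ω = s} = ⋂ p : {p : Fin N × Fin N // p.1 < p.2},
        X p.1.1 p.1.2 ⁻¹' (if p ∈ s then ({1} : Set ℝ) else {0}) := by
    intro s
    ext ω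
    simp only [Set.mem_setOf_eq, Set.mem_iInter, Set.mem_preimage]
    constructor
    · rintro rfl p
      by_cases hp : p ∈ c ω
      · rw [if_pos hp]; exact (hc p ω).mp hp
      · rw [if_neg hp]
        rcases h01 p.1.1 p.1.2 ω (hne p) with h0 | h1
        · exact h0
        · exact absurd ((hc p ω).mpr h1) hp
    · intro h
      ext p
      specialize h p
      by_cases hp : p ∈ s
      · rw [if_pos hp] at h
        simp only [hp, iff_true]
        exact (hc p ω).mpr h
      · rw [if_neg hp] at h
        simp only [hp, iff_false]
        intro hmem
        rw [(hc p ω).mp hmem] at h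
        exact one_ne_zero h
  have hmeasatom : ∀ s : Finset {p : Fin N × Fin N // p.1 < p.2},
      MeasurableSet {ω | c ω = s} := by
    intro s
    rw [hsetatom s]
    refine MeasurableSet.iInter fun p => (hmeas p.1.1 p.1.2) ?_
    split_ifs <;> exact measurableSet_singleton _
  -- probability of each atom
  have hatom : ∀ s : Finset {p : Fin N × Fin N // p.1 < p.2},
      (μ {ω | c ω = s}).toReal
        = (∏ p ∈ s, BTw v p) * ∏ p ∈ Finset.univ \ s, (1 - BTw v p) := by
    intro s
    rw [hsetatom s]
    rw [hindep.meas_iInter (fun p =>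
      ⟨(if p ∈ s then ({1} : Set ℝ) else {0}),
        by split_ifs <;> exact measurableSet_singleton _, rfl⟩)]
    rw [ENNReal.toReal_prod]
    have hg1 : ∀ p ∈ s,
        (μ (X p.1.1 p.1.2 ⁻¹' (if p ∈ s then ({1} : Set ℝ) else {0}))).toReal = BTw v p := by
      intro p hp
      rw [if_pos hp]
      have hpre : X p.1.1 p.1.2 ⁻¹' ({1} : Set ℝ) = {ω | X p.1.1 p.1.2 ω = 1} := by
        ext ω; simp
      rw [hpre]
      exact hlaw p.1.1 p.1.2 p.2
    have hg0 : ∀ p ∈ Finset.univ \ s,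
        (μ (X p.1.1 p.1.2 ⁻¹' (if p ∈ s then ({1} : Set ℝ) else {0}))).toReal
          = 1 - BTw v p := by
      intro p hp
      have hps : p ∉ s := (Finset.mem_sdiff.mp hp).2
      rw [if_neg hps]
      have hunion : X p.1.1 p.1.2 ⁻¹' ({0} : Set ℝ) ∪ X p.1.1 p.1.2 ⁻¹' ({1} : Set ℝ)
          = Set.univ := by
        ext ω
        simp only [Set.mem_union, Set.mem_preimage, Set.mem_singleton_iff, Set.mem_univ,
          iff_true]
        exact h01 p.1.1 p.1.2 ω (hne p)
      have hdisj : Disjoint (X p.1.1 p.1.2 ⁻¹' ({0} : Set ℝ))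
          (X p.1.1 p.1.2 ⁻¹' ({1} : Set ℝ)) := by
        rw [Set.disjoint_left]
        intro ω h0 h1
        simp only [Set.mem_preimage, Set.mem_singleton_iff] at h0 h1
        rw [h0] at h1
        exact one_ne_zero h1.symm
      have hsum : μ (X p.1.1 p.1.2 ⁻¹' ({0} : Set ℝ)) + μ (X p.1.1 p.1.2 ⁻¹' ({1} : Set ℝ))
          = 1 := by
        rw [← measure_union hdisj ((hmeas p.1.1 p.1.2) (measurableSet_singleton _)), hunion,
          measure_univ]
      have htr := congrArg ENNReal.toReal hsum
      rw [ENNReal.toReal_add (measure_ne_top μ _) (measure_ne_top μ _), ENNReal.toReal_one]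
        at htr
      have hpre : X p.1.1 p.1.2 ⁻¹' ({1} : Set ℝ) = {ω | X p.1.1 p.1.2 ω = 1} := by
        ext ω; simp
      rw [hpre, hlaw p.1.1 p.1.2 p.2] at htr
      have : (BTw v p : ℝ) = v p.1.1 / (v p.1.1 + v p.1.2) := rfl
      linarith [htr]
    calc (∏ p : {p : Fin N × Fin N // p.1 < p.2},
          (μ (X p.1.1 p.1.2 ⁻¹' (if p ∈ s then ({1} : Set ℝ) else {0}))).toReal)
        = (∏ p ∈ Finset.univ \ s,
            (μ (X p.1.1 p.1.2 ⁻¹' (if p ∈ s then ({1} : Set ℝ) else {0}))).toReal)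
          * ∏ p ∈ s,
            (μ (X p.1.1 p.1.2 ⁻¹' (if p ∈ s then ({1} : Set ℝ) else {0}))).toReal :=
          (Finset.prod_sdiff (Finset.subset_univ s)).symm
      _ = (∏ p ∈ Finset.univ \ s, (1 - BTw v p)) * ∏ p ∈ s, BTw v p := by
          rw [Finset.prod_congr rfl hg0, Finset.prod_congr rfl hg1]
      _ = (∏ p ∈ s, BTw v p) * ∏ p ∈ Finset.univ \ s, (1 - BTw v p) := mul_comm _ _
  -- probability of any configuration event
  have hkey : ∀ φ : Finset {p : Fin N × Fin N // p.1 < p.2} → Prop,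
      (μ {ω | φ (c ω)}).toReal
        = BTE (BTw v) Finset.univ (fun s => if φ s then 1 else 0) := by
    intro φ
    have hcover : {ω | φ (c ω)} = ⋃ s ∈ Finset.univ.filter φ, {ω | c ω = s} := by
      ext ω
      simp only [Set.mem_setOf_eq, Set.mem_iUnion, Finset.mem_filter, Finset.mem_univ,
        true_and]
      exact ⟨fun h => ⟨c ω, h, rfl⟩, fun ⟨s, hs, hcs⟩ => hcs ▸ hs⟩
    have hdisj : (↑(Finset.univ.filter φ) :
        Set (Finset {p : Fin N × Fin N // p.1 < p.2})).PairwiseDisjoint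
        (fun s => {ω | c ω = s}) := by
      intro s _ t _ hst
      exact Set.disjoint_left.mpr fun ω h1 h2 => hst (h1.symm.trans h2)
    rw [hcover, measure_biUnion_finset hdisj (fun s _ => hmeasatom s),
      ENNReal.toReal_sum (fun s _ => measure_ne_top μ _), BTE, Finset.powerset_univ,
      Finset.sum_filter]
    refine Finset.sum_congr rfl fun s _ => ?_
    split_ifs with h
    · rw [hatom s]; ring
    · ring
  -- the indicator functions
  have hf0 : ∀ (i : Fin N) s, (0:ℝ) ≤ if BTscore i s ≤ a then 1 else 0 := by
    intro i s; split_ifs <;> norm_num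
  -- rewrite both sides via hkey
  have hL : (μ {ω | Z ω ≤ a}).toReal
      = BTE (BTw v) Finset.univ
          (fun s => if (∀ i, BTscore i s ≤ a) then 1 else 0) := by
    have hset : {ω | Z ω ≤ a} = {ω | (fun s => ∀ i, BTscore i s ≤ a) (c ω)} := by
      ext ω
      simp only [Set.mem_setOf_eq, hZ ω, Finset.sup'_le_iff, Finset.mem_univ, true_implies]
      exact forall_congr' fun i => by rw [hSc i ω]
    rw [hset, hkey (fun s => ∀ i, BTscore i s ≤ a)]
    exact Finset.sum_congr rfl fun s _ => by by_cases h : ∀ i, BTscore i s ≤ a <;> simp [h]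
  have hR : ∀ i, (μ {ω | S i ω ≤ a}).toReal
      = BTE (BTw v) Finset.univ (fun s => if BTscore i s ≤ a then 1 else 0) := by
    intro i
    have hset : {ω | S i ω ≤ a} = {ω | (fun s => BTscore i s ≤ a) (c ω)} := by
      ext ω
      simp only [Set.mem_setOf_eq, hSc i ω]
    rw [hset, hkey (fun s => BTscore i s ≤ a)]
  rw [hL]
  have hRR : (∏ i : Fin N, (μ {ω | S i ω ≤ a}).toReal)
      = ∏ i : Fin N, BTE (BTw v) Finset.univ (fun s => if BTscore i s ≤ a then 1 else 0) :=
    Finset.prod_congr rfl fun i _ => hR i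
  rw [hRR]
  -- turn indicator of the intersection into a product of indicators
  have hbig : ∀ s, (if (∀ i, BTscore i s ≤ a) then (1:ℝ) else 0)
      = ∏ i : Fin N, (if BTscore i s ≤ a then (1:ℝ) else 0) := by
    intro s
    split_ifs with h
    · exact (Finset.prod_eq_one fun i _ => if_pos (h i)).symm
    · push_neg at h
      obtain ⟨i, hi⟩ := h
      exact (Finset.prod_eq_zero (Finset.mem_univ i)
        (if_neg (not_le.mpr hi) : (if BTscore i s ≤ a then (1:ℝ) else 0) = 0)).symm
  have hLL : BTE (BTw v) Finset.univ (fun s => if (∀ i, BTscore i s ≤ a) then 1 else 0)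
      = BTE (BTw v) Finset.univ
          (fun s => ∏ i ∈ Finset.univ, (if BTscore i s ≤ a then (1:ℝ) else 0)) :=
    Finset.sum_congr rfl fun s _ => by simp only [hbig s]
  rw [hLL]
  -- apply the combinatorial inequality
  exact BTE_main hw0 hw1 (fun p => p.1.1) (fun p => p.1.2) (fun p => p.2)
    (fun i s => if BTscore i s ≤ a then 1 else 0) hf0
    (fun i p s h1 h2 => by simp only [BTscore_insert_ne i p s h1 h2])
    (fun p s => by
      by_cases h1 : BTscore p.1.2 s ≤ a
      · rw [if_pos h1, if_pos (le_trans (BTscore_hi p s) h1)]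
      · rw [if_neg h1]; split_ifs <;> norm_num)
    (fun p s => by
      by_cases h1 : BTscore p.1.1 (insert p s) ≤ a
      · rw [if_pos h1, if_pos (le_trans (BTscore_lo p s) h1)]
      · rw [if_neg h1]; split_ifs <;> norm_num)
    Finset.univ
end

section
/- Let (ζ_n) be a sequence of real random variables and (a_n) a sequence tending to ∞ such that for every u ∈ ℝ, (1/a_n) log E[exp(u a_n ζ_n)] → u²σ²/2 for some σ > 0. Then for every x > 0, liminf_n (1/a_n) log P(ζ_n > x) ≥ −x²/(2σ²). -/
open MeasureTheory Filter

private lemma mgf_ev {Ω : Type*} [MeasurableSpace Ω] (μ : Measure Ω)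
    [IsProbabilityMeasure μ] (ζ : ℕ → Ω → ℝ)
    (a : ℕ → ℝ) (ha : Tendsto a atTop atTop) (σ : ℝ) (hσ : 0 < σ)
    (hmgf : ∀ u : ℝ, Tendsto
      (fun n => (1 / a n) * Real.log (∫ ω, Real.exp (u * a n * ζ n ω) ∂μ))
      atTop (nhds (u ^ 2 * σ ^ 2 / 2))) (w : ℝ) (hw : w ≠ 0) :
    ∀ᶠ n in atTop, 1 < (∫ ω, Real.exp (w * a n * ζ n ω) ∂μ) ∧
      Integrable (fun ω => Real.exp (w * a n * ζ n ω)) μ := by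
  have hpos : (0:ℝ) < w ^ 2 * σ ^ 2 / 2 := by positivity
  filter_upwards [(hmgf w).eventually (eventually_gt_nhds hpos),
    ha.eventually_ge_atTop 1] with n h1 h2
  have han : 0 < a n := lt_of_lt_of_le one_pos h2
  have hZ0 : 0 ≤ ∫ ω, Real.exp (w * a n * ζ n ω) ∂μ :=
    integral_nonneg fun ω => (Real.exp_pos _).le
  have hlog : 0 < Real.log (∫ ω, Real.exp (w * a n * ζ n ω) ∂μ) := by
    by_contra h
    push_neg at h
    have : (1 / a n) * Real.log (∫ ω, Real.exp (w * a n * ζ n ω) ∂μ) ≤ 0 :=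
      mul_nonpos_of_nonneg_of_nonpos (by positivity) h
    linarith
  have hZ1 : 1 < ∫ ω, Real.exp (w * a n * ζ n ω) ∂μ := by
    by_contra h
    push_neg at h
    exact absurd hlog (not_lt.2 (Real.log_nonpos hZ0 h))
  refine ⟨hZ1, ?_⟩
  by_contra h
  rw [integral_undef h] at hZ1
  norm_num at hZ1

private lemma aux_eps {Ω : Type*} [MeasurableSpace Ω] (μ : Measure Ω)
    [IsProbabilityMeasure μ] (ζ : ℕ → Ω → ℝ) (hmeas : ∀ n, Measurable (ζ n))
    (a : ℕ → ℝ) (ha : Tendsto a atTop atTop) (σ : ℝ) (hσ : 0 < σ)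
    (hmgf : ∀ u : ℝ, Tendsto
      (fun n => (1 / a n) * Real.log (∫ ω, Real.exp (u * a n * ζ n ω) ∂μ))
      atTop (nhds (u ^ 2 * σ ^ 2 / 2)))
    (x : ℝ) (hx : 0 < x) (ε : ℝ) (hε : 0 < ε) :
    (x*(1+ε)/σ^2)^2 * σ^2/2 - (x*(1+ε)/σ^2) * (x*(1+2*ε)) ≤
      liminf (fun n => (1 / a n) * Real.log (μ {ω | x < ζ n ω}).toReal) atTop := by
  have hσ2 : (0:ℝ) < σ^2 := by positivity
  set u : ℝ := x*(1+ε)/σ^2 with hu_def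
  set v : ℝ := x*ε/σ^2 with hv_def
  set y : ℝ := x*(1+2*ε) with hy_def
  set δ : ℝ := x^2*ε^2/(4*σ^2) with hδ_def
  have hu : 0 < u := by rw [hu_def]; positivity
  have hv : 0 < v := by rw [hv_def]; positivity
  have hδpos : 0 < δ := by rw [hδ_def]; positivity
  have hunv : 0 < u - v := by
    rw [hu_def, hv_def]
    have : x*(1+ε)/σ^2 - x*ε/σ^2 = x/σ^2 := by field_simp; ring
    rw [this]; positivity
  have hxy : x < y := by rw [hy_def]; nlinarith
  -- eventual comparison of log-mgfs
  have h4 : ∀ᶠ n in atTop,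
      v*x + (1/a n) * Real.log (∫ ω, Real.exp ((u-v) * a n * ζ n ω) ∂μ)
        ≤ (1/a n) * Real.log (∫ ω, Real.exp (u * a n * ζ n ω) ∂μ) - δ := by
    have hlim := ((hmgf (u-v)).const_add (v*x)).sub (hmgf u)
    have hlt : (v*x + (u-v)^2 * σ^2/2) - u^2 * σ^2/2 < -δ := by
      have hid : (v*x + (u-v)^2 * σ^2/2) - u^2 * σ^2/2 = -(2*δ) := by
        rw [hu_def, hv_def, hδ_def]; field_simp; ring
      rw [hid]; linarith
    filter_upwards [hlim.eventually (eventually_lt_nhds hlt)] with n hn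
    linarith
  have h5 : ∀ᶠ n in atTop,
      -(v*y) + (1/a n) * Real.log (∫ ω, Real.exp ((u+v) * a n * ζ n ω) ∂μ)
        ≤ (1/a n) * Real.log (∫ ω, Real.exp (u * a n * ζ n ω) ∂μ) - δ := by
    have hlim := ((hmgf (u+v)).const_add (-(v*y))).sub (hmgf u)
    have hlt : (-(v*y) + (u+v)^2 * σ^2/2) - u^2 * σ^2/2 < -δ := by
      have hid : (-(v*y) + (u+v)^2 * σ^2/2) - u^2 * σ^2/2 = -(2*δ) := by
        rw [hu_def, hv_def, hy_def, hδ_def]; field_simp; ring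
      rw [hid]; linarith
    filter_upwards [hlim.eventually (eventually_lt_nhds hlt)] with n hn
    linarith
  -- the main eventual lower bound
  have hbnd : ∀ᶠ n in atTop,
      (1/a n) * Real.log (∫ ω, Real.exp (u * a n * ζ n ω) ∂μ) - u*y - Real.log 2 / a n
        ≤ (1/a n) * Real.log (μ {ω | x < ζ n ω}).toReal := by
    filter_upwards [mgf_ev μ ζ a ha σ hσ hmgf u hu.ne',
      mgf_ev μ ζ a ha σ hσ hmgf (u-v) hunv.ne',
      mgf_ev μ ζ a ha σ hσ hmgf (u+v) (show (0:ℝ) < u + v by positivity).ne',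
      h4, h5, ha.eventually_ge_atTop (max 1 (Real.log 4 / δ))] with n hU hUV hUP hn4 hn5 han
    obtain ⟨hZu1, hIu⟩ := hU
    obtain ⟨hZuv1, hIuv⟩ := hUV
    obtain ⟨hZup1, hIup⟩ := hUP
    have han1 : 1 ≤ a n := le_trans (le_max_left _ _) han
    have han0 : 0 < a n := lt_of_lt_of_le one_pos han1
    have hanδ : Real.log 4 ≤ a n * δ := by
      have h := le_trans (le_max_right _ _) han
      calc Real.log 4 = (Real.log 4 / δ) * δ := by field_simp
        _ ≤ a n * δ := mul_le_mul_of_nonneg_right h hδpos.le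
    set Zu := ∫ ω, Real.exp (u * a n * ζ n ω) ∂μ with hZu_def
    set Zuv := ∫ ω, Real.exp ((u-v) * a n * ζ n ω) ∂μ with hZuv_def
    set Zup := ∫ ω, Real.exp ((u+v) * a n * ζ n ω) ∂μ with hZup_def
    set Λu := (1/a n) * Real.log Zu with hΛu_def
    have hZupos : 0 < Zu := zero_lt_one.trans hZu1
    have hZuvpos : 0 < Zuv := zero_lt_one.trans hZuv1
    have hZuppos : 0 < Zup := zero_lt_one.trans hZup1
    have hZu_eq : Zu = Real.exp (a n * Λu) := by
      rw [hΛu_def, show a n * ((1/a n) * Real.log Zu) = Real.log Zu by field_simp]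
      exact (Real.exp_log hZupos).symm
    -- sets
    set s1 : Set Ω := {ω | ζ n ω ≤ x} with hs1_def
    set s2 : Set Ω := {ω | x < ζ n ω} ∩ {ω | ζ n ω ≤ y} with hs2_def
    set s3 : Set Ω := {ω | y < ζ n ω} with hs3_def
    have hms1 : MeasurableSet s1 := measurableSet_le (hmeas n) measurable_const
    have hms2 : MeasurableSet s2 :=
      (measurableSet_lt measurable_const (hmeas n)).inter
        (measurableSet_le (hmeas n) measurable_const)
    have hms3 : MeasurableSet s3 := measurableSet_lt measurable_const (hmeas n)
    -- bound on s1 integral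
    have hA : ∫ ω in s1, Real.exp (u * a n * ζ n ω) ∂μ
        ≤ Real.exp (a n * (v*x + (1/a n) * Real.log Zuv)) := by
      have step1 : ∫ ω in s1, Real.exp (u * a n * ζ n ω) ∂μ
          ≤ ∫ ω in s1, Real.exp (v * a n * x) * Real.exp ((u-v) * a n * ζ n ω) ∂μ := by
        refine setIntegral_mono_on hIu.integrableOn (hIuv.const_mul _).integrableOn hms1 ?_
        intro ω hω
        rw [← Real.exp_add]
        apply Real.exp_le_exp.2
        have h1 : v * a n * ζ n ω ≤ v * a n * x :=
          mul_le_mul_of_nonneg_left hω (by positivity)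
        have h2 : u * a n * ζ n ω = v * a n * ζ n ω + (u-v) * a n * ζ n ω := by ring
        rw [h2]; linarith
      have step2 : ∫ ω in s1, Real.exp (v * a n * x) * Real.exp ((u-v) * a n * ζ n ω) ∂μ
          ≤ Real.exp (v * a n * x) * Zuv := by
        rw [integral_const_mul]
        exact mul_le_mul_of_nonneg_left
          (setIntegral_le_integral hIuv (ae_of_all _ fun ω => (Real.exp_pos _).le))
          (Real.exp_pos _).le
      have hrepr : Real.exp (a n * (v*x + (1/a n) * Real.log Zuv))
          = Real.exp (v * a n * x) * Zuv := by
        rw [show a n * (v*x + (1/a n) * Real.log Zuv) = v * a n * x + Real.log Zuv by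
          field_simp]
        rw [Real.exp_add, Real.exp_log hZuvpos]
      rw [hrepr]
      exact le_trans step1 step2
    -- bound on s3 integral
    have hB : ∫ ω in s3, Real.exp (u * a n * ζ n ω) ∂μ
        ≤ Real.exp (a n * (-(v*y) + (1/a n) * Real.log Zup)) := by
      have step1 : ∫ ω in s3, Real.exp (u * a n * ζ n ω) ∂μ
          ≤ ∫ ω in s3, Real.exp (-(v * a n * y)) * Real.exp ((u+v) * a n * ζ n ω) ∂μ := by
        refine setIntegral_mono_on hIu.integrableOn (hIup.const_mul _).integrableOn hms3 ?_
        intro ω hω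
        rw [← Real.exp_add]
        apply Real.exp_le_exp.2
        have h1 : v * a n * y ≤ v * a n * ζ n ω :=
          mul_le_mul_of_nonneg_left (le_of_lt hω) (by positivity)
        have h2 : u * a n * ζ n ω = -(v * a n * ζ n ω) + (u+v) * a n * ζ n ω := by ring
        rw [h2]; linarith
      have step2 : ∫ ω in s3, Real.exp (-(v * a n * y)) * Real.exp ((u+v) * a n * ζ n ω) ∂μ
          ≤ Real.exp (-(v * a n * y)) * Zup := by
        rw [integral_const_mul]
        exact mul_le_mul_of_nonneg_left
          (setIntegral_le_integral hIup (ae_of_all _ fun ω => (Real.exp_pos _).le))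
          (Real.exp_pos _).le
      have hrepr : Real.exp (a n * (-(v*y) + (1/a n) * Real.log Zup))
          = Real.exp (-(v * a n * y)) * Zup := by
        rw [show a n * (-(v*y) + (1/a n) * Real.log Zup) = -(v * a n * y) + Real.log Zup by
          field_simp]
        rw [Real.exp_add, Real.exp_log hZuppos]
      rw [hrepr]
      exact le_trans step1 step2
    -- decomposition
    have hcompl : s1ᶜ = {ω | x < ζ n ω} := by
      ext ω; simp [hs1_def, not_le]
    have hsplit : {ω | x < ζ n ω} = s2 ∪ s3 := by
      ext ω
      constructor
      · intro hω
        by_cases h : ζ n ω ≤ y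
        · exact Or.inl ⟨hω, h⟩
        · exact Or.inr (not_le.1 h)
      · rintro (⟨h, _⟩ | h)
        · exact h
        · exact lt_trans hxy h
    have hdisj : Disjoint s2 s3 := by
      rw [Set.disjoint_left]
      rintro ω ⟨_, h2⟩ h3
      simp only [hs3_def, Set.mem_setOf_eq] at h3
      simp only [Set.mem_setOf_eq] at h2
      exact absurd h3 (not_lt.2 h2)
    have hZsum : Zu = (∫ ω in s1, Real.exp (u * a n * ζ n ω) ∂μ)
        + ((∫ ω in s2, Real.exp (u * a n * ζ n ω) ∂μ)
          + (∫ ω in s3, Real.exp (u * a n * ζ n ω) ∂μ)) := by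
      rw [hZu_def, ← integral_add_compl hms1 hIu, hcompl, hsplit,
        setIntegral_union hdisj hms3 hIu.integrableOn hIu.integrableOn]
    -- quarter bounds
    have hquarter : Real.exp (a n * (Λu - δ)) ≤ Zu / 4 := by
      have hrw : Real.exp (a n * (Λu - δ)) = Zu * Real.exp (-(a n * δ)) := by
        rw [hZu_eq, ← Real.exp_add]
        ring_nf
      rw [hrw]
      have h4' : Real.exp (-(a n * δ)) ≤ 1/4 := by
        rw [show (1/4 : ℝ) = Real.exp (-Real.log 4) by
          rw [Real.exp_neg, Real.exp_log (by norm_num : (0:ℝ) < 4)]; norm_num]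
        exact Real.exp_le_exp.2 (neg_le_neg hanδ)
      calc Zu * Real.exp (-(a n * δ)) ≤ Zu * (1/4) :=
            mul_le_mul_of_nonneg_left h4' hZupos.le
        _ = Zu / 4 := by ring
    have hA' : ∫ ω in s1, Real.exp (u * a n * ζ n ω) ∂μ ≤ Zu / 4 :=
      le_trans (le_trans hA (Real.exp_le_exp.2 (mul_le_mul_of_nonneg_left hn4 han0.le)))
        hquarter
    have hB' : ∫ ω in s3, Real.exp (u * a n * ζ n ω) ∂μ ≤ Zu / 4 :=
      le_trans (le_trans hB (Real.exp_le_exp.2 (mul_le_mul_of_nonneg_left hn5 han0.le)))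
        hquarter
    have hM : Zu / 2 ≤ ∫ ω in s2, Real.exp (u * a n * ζ n ω) ∂μ := by linarith
    -- upper bound for the s2 integral
    have hMle : ∫ ω in s2, Real.exp (u * a n * ζ n ω) ∂μ
        ≤ (μ s2).toReal * Real.exp (u * a n * y) := by
      have hmono : ∫ ω in s2, Real.exp (u * a n * ζ n ω) ∂μ
          ≤ ∫ _ω in s2, Real.exp (u * a n * y) ∂μ := by
        refine setIntegral_mono_on hIu.integrableOn
          (integrableOn_const (measure_ne_top μ s2)) hms2 ?_
        intro ω hω
        exact Real.exp_le_exp.2 (mul_le_mul_of_nonneg_left hω.2 (by positivity))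
      rwa [setIntegral_const, smul_eq_mul] at hmono
    have hZE : Zu / 2 ≤ (μ s2).toReal * Real.exp (u * a n * y) := le_trans hM hMle
    have h6 : Real.exp (a n * Λu - Real.log 2 - u * a n * y) ≤ (μ s2).toReal := by
      have hrepr : Real.exp (a n * Λu - Real.log 2 - u * a n * y)
          = (Zu / 2) / Real.exp (u * a n * y) := by
        rw [Real.exp_sub, Real.exp_sub, Real.exp_log two_pos, hZu_eq]
      rw [hrepr]
      exact (div_le_iff₀ (Real.exp_pos _)).2 hZE
    have hsub : s2 ⊆ {ω | x < ζ n ω} := fun ω hω => hω.1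
    have hμle : (μ s2).toReal ≤ (μ {ω | x < ζ n ω}).toReal :=
      ENNReal.toReal_mono (measure_ne_top μ _) (measure_mono hsub)
    have htpos : 0 < (μ {ω | x < ζ n ω}).toReal :=
      lt_of_lt_of_le (lt_of_lt_of_le (Real.exp_pos _) h6) hμle
    have hlogt : a n * Λu - Real.log 2 - u * a n * y
        ≤ Real.log ((μ {ω | x < ζ n ω}).toReal) :=
      (Real.le_log_iff_exp_le htpos).2 (le_trans h6 hμle)
    have hfin := mul_le_mul_of_nonneg_left hlogt (le_of_lt (one_div_pos.2 han0))
    calc Λu - u*y - Real.log 2 / a n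
        = (1/a n) * (a n * Λu - Real.log 2 - u * a n * y) := by field_simp; ring
      _ ≤ (1/a n) * Real.log ((μ {ω | x < ζ n ω}).toReal) := hfin
  -- pass to the liminf
  have hg : Tendsto (fun n => (1/a n) * Real.log (∫ ω, Real.exp (u * a n * ζ n ω) ∂μ)
      - u*y - Real.log 2 / a n) atTop (nhds (u^2 * σ^2/2 - u*y)) := by
    have h1 := (hmgf u).sub_const (u*y)
    have h2 : Tendsto (fun n => Real.log 2 / a n) atTop (nhds 0) :=
      Tendsto.div_atTop tendsto_const_nhds ha
    simpa using h1.sub h2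
  have hcobdd : IsCoboundedUnder (· ≥ ·) atTop
      (fun n => (1 / a n) * Real.log (μ {ω | x < ζ n ω}).toReal) := by
    refine Filter.IsBoundedUnder.isCoboundedUnder_ge ?_
    refine isBoundedUnder_of_eventually_le (a := 0) ?_
    filter_upwards [ha.eventually_ge_atTop 1] with n hn
    have han0 : 0 < a n := lt_of_lt_of_le one_pos hn
    refine mul_nonpos_of_nonneg_of_nonpos (by positivity) ?_
    refine Real.log_nonpos ENNReal.toReal_nonneg ?_
    simpa using ENNReal.toReal_mono ENNReal.one_ne_top (prob_le_one (μ := μ))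
  calc u^2 * σ^2/2 - u*y
      = liminf (fun n => (1/a n) * Real.log (∫ ω, Real.exp (u * a n * ζ n ω) ∂μ)
          - u*y - Real.log 2 / a n) atTop := hg.liminf_eq.symm
    _ ≤ liminf (fun n => (1 / a n) * Real.log (μ {ω | x < ζ n ω}).toReal) atTop :=
        liminf_le_liminf hbnd hg.isBoundedUnder_ge hcobdd

/-- Lower bound consequence of the Gärtner–Ellis theorem with a Gaussian
limiting log-moment generating function. -/
theorem gartner_ellis_gaussian_lower {Ω : Type*} [MeasurableSpace Ω] (μ : Measure Ω)
    [IsProbabilityMeasure μ] (ζ : ℕ → Ω → ℝ) (hmeas : ∀ n, Measurable (ζ n))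
    (a : ℕ → ℝ) (ha : Tendsto a atTop atTop) (σ : ℝ) (hσ : 0 < σ)
    (hmgf : ∀ u : ℝ, Tendsto
      (fun n => (1 / a n) * Real.log (∫ ω, Real.exp (u * a n * ζ n ω) ∂μ))
      atTop (nhds (u ^ 2 * σ ^ 2 / 2))) :
    ∀ x > (0:ℝ), -(x ^ 2 / (2 * σ ^ 2)) ≤
      liminf (fun n => (1 / a n) * Real.log (μ {ω | x < ζ n ω}).toReal) atTop := by
  intro x hx
  have key : ∀ ε : ℝ, 0 < ε →
      (x*(1+ε)/σ^2)^2 * σ^2/2 - (x*(1+ε)/σ^2) * (x*(1+2*ε)) ≤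
        liminf (fun n => (1 / a n) * Real.log (μ {ω | x < ζ n ω}).toReal) atTop :=
    fun ε hε => aux_eps μ ζ hmeas a ha σ hσ hmgf x hx ε hε
  have hc : Continuous fun ε : ℝ =>
      (x*(1+ε)/σ^2)^2 * σ^2/2 - (x*(1+ε)/σ^2) * (x*(1+2*ε)) := by fun_prop
  have h0 : (x*(1+(0:ℝ))/σ^2)^2 * σ^2/2 - (x*(1+(0:ℝ))/σ^2) * (x*(1+2*(0:ℝ)))
      = -(x ^ 2 / (2 * σ ^ 2)) := by
    have hσ2 : σ^2 ≠ 0 := by positivity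
    field_simp
    ring
  have htend : Tendsto (fun ε : ℝ =>
      (x*(1+ε)/σ^2)^2 * σ^2/2 - (x*(1+ε)/σ^2) * (x*(1+2*ε)))
      (nhdsWithin 0 (Set.Ioi 0)) (nhds (-(x ^ 2 / (2 * σ ^ 2)))) := by
    rw [← h0]
    exact (hc.tendsto 0).mono_left nhdsWithin_le_nhds
  exact le_of_tendsto htend (eventually_nhdsWithin_of_forall fun ε hε => key ε hε)
end

section
/- Let N be even and let σ be the permutation of {1,...,N} with σ(1)=1, σ(N)=2, and σ(i)=i+1 for 1<i<N. Define A(k,i) = σ^{-(k-1)}(N+1−σ^{(k-1)}(i)) for k ∈ {1,...,N−1}, i ∈ {1,...,N}. Then for each k, the map i ↦ A(k,i) is an involution of {1,...,N} with no fixed point, and for each i, the map k ↦ A(k,i) is a bijection from {1,...,N−1} onto {1,...,N}\{i}. -/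
open Set

private lemma rr_mul_bound (n s : ℤ) (hn : 0 < n) (h1 : -n < n*s) (h2 : n*s < n) : s = 0 := by
  rcases lt_trichotomy s 0 with h|h|h
  · have : n*s ≤ n*(-1) := mul_le_mul_of_nonneg_left (by omega) hn.le
    omega
  · exact h
  · have : n*1 ≤ n*s := mul_le_mul_of_nonneg_left (by omega) hn.le
    omega

private lemma rr_modcancel (n a b : ℤ) (hn : 0 < n) (h : a % n = b % n)
    (h1 : -n < a - b) (h2 : a - b < n) : a = b := by
  obtain ⟨t, ht⟩ := Int.ModEq.dvd (show Int.ModEq n a b from h)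
  have hs : n * t = b - a := ht.symm
  have h5 := rr_mul_bound n t hn (by omega) (by omega)
  rw [h5, mul_zero] at hs
  omega

private lemma rr_modcancel2 (n a b : ℤ) (hn : 0 < n) (hodd : Odd n)
    (hdvd : n ∣ 2*(a-b)) (h1 : -n < a - b) (h2 : a - b < n) : a = b := by
  obtain ⟨t, ht⟩ := hdvd
  obtain ⟨u, hu⟩ := hodd
  have ht2 : t = 2*((a-b) - u*t) := by
    have h3 : 2*(a-b) = 2*(u*t) + t := by rw [ht, hu]; ring
    linarith
  have hs : a - b = n * ((a-b) - u*t) := by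
    have h4 : 2*(a-b) = 2*(n*((a-b) - u*t)) := by
      rw [ht]; conv_lhs => rw [ht2]
      ring
    linarith
  have h5 := rr_mul_bound n ((a-b) - u*t) hn (by omega) (by omega)
  rw [h5, mul_zero] at hs
  omega

private lemma rr_dvd_range2 (n x : ℤ) (hn : 0 < n) (hd : n ∣ x) (h1 : -n < x) (h2 : x ≤ n) :
    x = 0 ∨ x = n := by
  obtain ⟨t, ht⟩ := hd
  rcases lt_trichotomy t 0 with h|h|h
  · have : n*t ≤ n*(-1) := mul_le_mul_of_nonneg_left (by omega) hn.le
    omega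
  · left; rw [ht, h, mul_zero]
  · rcases lt_trichotomy t 1 with h'|h'|h'
    · omega
    · right; rw [ht, h', mul_one]
    · have : n*2 ≤ n*t := mul_le_mul_of_nonneg_left (by omega) hn.le
      omega

private lemma rr_succ_mod (a n : ℤ) (hn : 0 < n) :
    (a+1) % n = if a % n = n - 1 then 0 else a % n + 1 := by
  have h0 : 0 ≤ a % n := Int.emod_nonneg a (by omega)
  have h1 : a % n < n := Int.emod_lt_of_pos a hn
  have key : (a+1) % n = (a % n + 1) % n := by
    have h2 : a + 1 = (a % n + 1) + n * (a / n) := by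
      have := Int.mul_ediv_add_emod a n; linarith
    rw [h2, Int.add_mul_emod_self_left]
  rw [key]
  split
  · next h => rw [h]; simp
  · next h => exact Int.emod_eq_of_lt (by omega) (by omega)

private lemma rr_pred_mod (a n : ℤ) (hn : 0 < n) :
    (a-1) % n = if a % n = 0 then n - 1 else a % n - 1 := by
  have h0 : 0 ≤ a % n := Int.emod_nonneg a (by omega)
  have h1 : a % n < n := Int.emod_lt_of_pos a hn
  have key : (a-1) % n = (a % n - 1 + n) % n := by
    have h2 : a - 1 = (a % n - 1 + n) + n * (a / n - 1) := by
      have := Int.mul_ediv_add_emod a n; linarith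
    rw [h2, Int.add_mul_emod_self_left]
  rw [key]
  split
  · next h =>
      have e : a % n - 1 + n = n - 1 := by omega
      rw [e]; exact Int.emod_eq_of_lt (by omega) (by omega)
  · next h =>
      have : a % n - 1 + n = (a % n - 1) + n * 1 := by ring
      rw [this, Int.add_mul_emod_self_left]
      refine Int.emod_eq_of_lt ?_ ?_ <;> omega

private lemma rr_mod_absorb (a c v n : ℤ) : (a + c*(v % n)) % n = (a + c*v) % n := by
  have h : Int.ModEq n (v % n) v := Int.emod_emod_of_dvd v dvd_rfl
  exact (Int.ModEq.add_left a (Int.ModEq.mul_left c h))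

private lemma rr_zpow_formula (N : ℤ) (hN : 2 ≤ N) (σ : Equiv.Perm ℤ)
    (hσN : σ N = 2) (hσmid : ∀ i : ℤ, 1 < i → i < N → σ i = i + 1) :
    ∀ m : ℤ, ∀ j, 2 ≤ j → j ≤ N → (σ^m) j = 2 + (j - 2 + m) % (N-1) := by
  have hn : 0 < N - 1 := by omega
  intro m
  induction m using Int.induction_on with
  | zero =>
      intro j h2 hj
      simp only [zpow_zero, Equiv.Perm.coe_one, id_eq]
      have : (j - 2 + 0) % (N-1) = j - 2 := by
        rw [show j - 2 + 0 = j - 2 from by ring]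
        exact Int.emod_eq_of_lt (by omega) (by omega)
      omega
  | succ k ih =>
      intro j h2 hj
      have hk : σ^((k:ℤ)+1) = σ * σ^(k:ℤ) := by
        rw [show ((k:ℤ)+1) = 1 + (k:ℤ) from by ring, zpow_one_add]
      set r := (j - 2 + (k:ℤ)) % (N-1) with hr
      have hr0 : 0 ≤ r := Int.emod_nonneg _ (by omega)
      have hr1 : r < N - 1 := Int.emod_lt_of_pos _ hn
      have hik : (σ^(k:ℤ)) j = 2 + r := ih j h2 hj
      rw [hk, Equiv.Perm.mul_apply, hik]
      have hsucc := rr_succ_mod (j - 2 + (k:ℤ)) (N-1) hn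
      rw [show j - 2 + ((k:ℤ)+1) = (j-2+(k:ℤ)) + 1 from by ring, hsucc]
      by_cases hc : r = N - 2
      · rw [if_pos (by omega)]
        have : σ (2 + r) = 2 := by rw [show 2 + r = N from by omega]; exact hσN
        rw [this]; ring
      · rw [if_neg (by omega)]
        have : σ (2 + r) = 2 + r + 1 := hσmid _ (by omega) (by omega)
        rw [this]
        omega
  | pred k ih =>
      intro j h2 hj
      have hk : σ^(-(k:ℤ)-1) = σ⁻¹ * σ^(-(k:ℤ)) := by
        rw [← zpow_neg_one, ← zpow_add]
        ring_nf
      set r := (j - 2 + (-(k:ℤ))) % (N-1) with hr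
      have hr0 : 0 ≤ r := Int.emod_nonneg _ (by omega)
      have hr1 : r < N - 1 := Int.emod_lt_of_pos _ hn
      have hik : (σ^(-(k:ℤ))) j = 2 + r := ih j h2 hj
      rw [hk, Equiv.Perm.mul_apply, hik]
      have hpred := rr_pred_mod (j - 2 + (-(k:ℤ))) (N-1) hn
      rw [show j - 2 + (-(k:ℤ)-1) = (j-2+(-(k:ℤ))) - 1 from by ring, hpred]
      by_cases hc : r = 0
      · rw [if_pos (by omega)]
        have hσinv : σ⁻¹ (2 + r) = N := by
          rw [show 2 + r = 2 from by omega, ← hσN]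
          exact Equiv.symm_apply_apply σ N
        rw [hσinv]; omega
      · rw [if_neg (by omega)]
        have hσinv : σ⁻¹ (2 + r) = 1 + r := by
          have h5 : σ (1 + r) = 2 + r := by
            rw [hσmid (1+r) (by omega) (by omega)]; ring
          rw [← h5]
          exact Equiv.symm_apply_apply σ (1+r)
        rw [hσinv]; omega

open Set

/-- Correctness of the round-robin scheduling algorithm: `A k i` is the opponent of
player `i` in round `k`; each `A (k, ·)` is a fixed-point-free involution of
`{1,…,N}`, and for each player `i`, `A (·, i)` is a bijection from `{1,…,N-1}`
onto `{1,…,N} \ {i}`. -/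
theorem round_robin_correct (N : ℤ) (hN : 2 ≤ N) (hNeven : Even N)
    (σ : Equiv.Perm ℤ)
    (hσ1 : σ 1 = 1) (hσN : σ N = 2) (hσmid : ∀ i : ℤ, 1 < i → i < N → σ i = i + 1)
    (hσout : ∀ i : ℤ, i ∉ Icc 1 N → σ i = i)
    (A : ℤ → ℤ → ℤ)
    (hA : ∀ k i : ℤ, A k i = (σ ^ (-(k - 1))) (N + 1 - (σ ^ (k - 1)) i)) :
    (∀ k ∈ Icc 1 (N - 1), ∀ i ∈ Icc 1 N,
        A k i ∈ Icc 1 N ∧ A k (A k i) = i ∧ A k i ≠ i) ∧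
    (∀ i ∈ Icc 1 N, BijOn (fun k => A k i) (Icc 1 (N - 1)) (Icc 1 N \ {i})) := by
  have hn : 0 < N - 1 := by omega
  have F := rr_zpow_formula N hN σ hσN hσmid
  have F1 : ∀ m : ℤ, (σ^m) 1 = 1 := fun m =>
    (show Function.IsFixedPt σ 1 from hσ1).perm_zpow m
  have c1 : ∀ (m : ℤ) (x : ℤ), (σ^m) ((σ^(-m)) x) = x := by
    intro m x
    rw [← Equiv.Perm.mul_apply, ← zpow_add, add_neg_cancel, zpow_zero, Equiv.Perm.one_apply]
  have c2 : ∀ (m : ℤ) (x : ℤ), (σ^(-m)) ((σ^m) x) = x := by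
    intro m x
    rw [← Equiv.Perm.mul_apply, ← zpow_add, neg_add_cancel, zpow_zero, Equiv.Perm.one_apply]
  have hAiff : ∀ k i j : ℤ, A k i = j ↔ (σ^(k-1)) j = N + 1 - (σ^(k-1)) i := by
    intro k i j
    rw [hA]
    constructor
    · intro h; rw [← h]; exact c1 _ _
    · intro h; rw [← h]; exact c2 _ _
  have preserve : ∀ (m : ℤ) (x : ℤ), 1 ≤ x → x ≤ N → 1 ≤ (σ^m) x ∧ (σ^m) x ≤ N := by
    intro m x h1 h2
    rcases eq_or_lt_of_le h1 with h|h
    · rw [← h, F1]; omega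
    · rw [F m x (by omega) h2]
      have := Int.emod_nonneg (x - 2 + m) (show N-1 ≠ 0 by omega)
      have := Int.emod_lt_of_pos (x - 2 + m) hn
      omega
  have hne : ∀ k i : ℤ, A k i ≠ i := by
    intro k i h
    have h2 := (hAiff k i i).mp h
    obtain ⟨t, ht⟩ := hNeven
    omega
  have hmem : ∀ k i : ℤ, 1 ≤ i → i ≤ N → 1 ≤ A k i ∧ A k i ≤ N := by
    intro k i h1 h2
    have ha := preserve (k-1) i h1 h2
    have hb := preserve (-(k-1)) (N + 1 - (σ^(k-1)) i) (by omega) (by omega)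
    rw [hA]; exact hb
  obtain ⟨u, hu⟩ : Odd (N - 1) := by obtain ⟨t, ht⟩ := hNeven; exact ⟨t - 1, by omega⟩
  constructor
  · intro k hk i hi
    simp only [mem_Icc] at hk hi
    refine ⟨?_, ?_, hne k i⟩
    · simp only [mem_Icc]
      exact hmem k i hi.1 hi.2
    · rw [hA k (A k i), hA k i, c1,
        show N + 1 - (N + 1 - (σ^(k-1)) i) = (σ^(k-1)) i from by ring]
      exact c2 _ _
  · intro i hi
    simp only [mem_Icc] at hi
    refine ⟨?_, ?_, ?_⟩
    · -- MapsTo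
      intro k hk
      simp only [mem_diff, mem_Icc, mem_singleton_iff]
      exact ⟨hmem k i hi.1 hi.2, hne k i⟩
    · -- InjOn
      intro k hk k' hk' hEq'
      simp only [mem_Icc] at hk hk'
      have hEq : A k i = A k' i := hEq'
      obtain ⟨j, hj⟩ : ∃ j, A k i = j := ⟨_, rfl⟩
      have hji := hne k i
      have hjmem := hmem k i hi.1 hi.2
      rw [hj] at hjmem
      have e1 : (σ^(k-1)) j = N + 1 - (σ^(k-1)) i := (hAiff k i j).mp hj
      have e2 : (σ^(k'-1)) j = N + 1 - (σ^(k'-1)) i :=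
        (hAiff k' i j).mp (hEq.symm.trans hj)
      rcases eq_or_lt_of_le hi.1 with hi1|hi1
      · -- i = 1
        rw [← hi1, F1] at e1 e2
        have hjj : 2 ≤ j := by
          rcases eq_or_lt_of_le hjmem.1 with h|h
          · exact absurd (by omega : A k i = i) hji
          · omega
        rw [F (k-1) j hjj hjmem.2] at e1
        rw [F (k'-1) j hjj hjmem.2] at e2
        have := rr_modcancel (N-1) (j-2+(k-1)) (j-2+(k'-1)) hn (by omega) (by omega) (by omega)
        omega
      · -- i ≥ 2
        rcases eq_or_lt_of_le hjmem.1 with hj1|hj1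
        · -- j = 1
          rw [← hj1, F1] at e1 e2
          rw [F (k-1) i (by omega) hi.2] at e1
          rw [F (k'-1) i (by omega) hi.2] at e2
          have := rr_modcancel (N-1) (i-2+(k-1)) (i-2+(k'-1)) hn (by omega) (by omega) (by omega)
          omega
        · -- both ≥ 2
          rw [F (k-1) j (by omega) hjmem.2, F (k-1) i (by omega) hi.2] at e1
          rw [F (k'-1) j (by omega) hjmem.2, F (k'-1) i (by omega) hi.2] at e2
          have g1 : (i-2+(k-1) + (j-2+(k-1))) % (N-1)
              = ((i-2+(k-1))%(N-1) + (j-2+(k-1))%(N-1)) % (N-1) := Int.add_emod _ _ _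
          have g2 : (i-2+(k'-1) + (j-2+(k'-1))) % (N-1)
              = ((i-2+(k'-1))%(N-1) + (j-2+(k'-1))%(N-1)) % (N-1) := Int.add_emod _ _ _
          have g3 : (i-2+(k-1) + (j-2+(k-1))) % (N-1)
              = (i-2+(k'-1) + (j-2+(k'-1))) % (N-1) := by
            rw [g1, g2]; congr 1; omega
          have hdvd : (N-1) ∣ 2*((k-1) - (k'-1)) := by
            obtain ⟨t, ht⟩ := Int.ModEq.dvd (show Int.ModEq (N-1) _ _ from g3)
            exact ⟨-t, by rw [mul_neg]; omega⟩
          have := rr_modcancel2 (N-1) (k-1) (k'-1) hn ⟨u, hu⟩ hdvd (by omega) (by omega)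
          omega
    · -- SurjOn
      intro j hj
      simp only [mem_diff, mem_Icc, mem_singleton_iff] at hj
      obtain ⟨⟨hj1, hj2⟩, hji⟩ := hj
      rcases eq_or_lt_of_le hi.1 with hi1|hi1
      · -- i = 1
        have hjj : 2 ≤ j := by omega
        have hm0 : 0 ≤ (N-j) % (N-1) := Int.emod_nonneg _ (by omega)
        have hm1 : (N-j) % (N-1) < N-1 := Int.emod_lt_of_pos _ hn
        refine ⟨(N-j) % (N-1) + 1, by simp only [mem_Icc]; omega, ?_⟩
        show A ((N-j)%(N-1)+1) i = j
        rw [hAiff, show (N-j)%(N-1)+1-1 = (N-j)%(N-1) from by ring, ← hi1, F1,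
          F ((N-j)%(N-1)) j hjj hj2]
        have habs := rr_mod_absorb (j-2) 1 (N-j) (N-1)
        simp only [one_mul] at habs
        rw [habs, show j - 2 + (N - j) = N - 2 from by ring,
          Int.emod_eq_of_lt (by omega) (by omega)]
        omega
      · rcases eq_or_lt_of_le hj1 with hjj|hjj
        · -- j = 1, i ≥ 2
          have hm0 : 0 ≤ (N-i) % (N-1) := Int.emod_nonneg _ (by omega)
          have hm1 : (N-i) % (N-1) < N-1 := Int.emod_lt_of_pos _ hn
          refine ⟨(N-i) % (N-1) + 1, by simp only [mem_Icc]; omega, ?_⟩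
          show A ((N-i)%(N-1)+1) i = j
          rw [hAiff, show (N-i)%(N-1)+1-1 = (N-i)%(N-1) from by ring, ← hjj, F1,
            F ((N-i)%(N-1)) i (by omega) hi.2]
          have habs := rr_mod_absorb (i-2) 1 (N-i) (N-1)
          simp only [one_mul] at habs
          rw [habs, show i - 2 + (N - i) = N - 2 from by ring,
            Int.emod_eq_of_lt (by omega) (by omega)]
          omega
        · -- both ≥ 2
          have hN4 : 4 ≤ N := by obtain ⟨t, ht⟩ := hNeven; omega
          set w := N + 1 - i - j with hw
          set m := ((u+1)*w) % (N-1) with hm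
          have hm0 : 0 ≤ m := Int.emod_nonneg _ (by omega)
          have hm1 : m < N-1 := Int.emod_lt_of_pos _ hn
          refine ⟨m+1, by simp only [mem_Icc]; omega, ?_⟩
          show A (m+1) i = j
          rw [hAiff, show m+1-1 = m from by ring,
            F m j (by omega) hj2, F m i (by omega) hi.2]
          set ci := (i-2+m)%(N-1) with hci
          set cj := (j-2+m)%(N-1) with hcj
          have hci0 : 0 ≤ ci := Int.emod_nonneg _ (by omega)
          have hci1 : ci < N-1 := Int.emod_lt_of_pos _ hn
          have hcj0 : 0 ≤ cj := Int.emod_nonneg _ (by omega)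
          have hcj1 : cj < N-1 := Int.emod_lt_of_pos _ hn
          have g1 : (ci + cj) % (N-1) = (i-2+m + (j-2+m)) % (N-1) :=
            (Int.add_emod _ _ _).symm
          have g2 : (i-2+m + (j-2+m)) % (N-1) = (N-3) % (N-1) := by
            rw [show i-2+m + (j-2+m) = (i+j-4) + 2*m from by ring, hm,
              rr_mod_absorb (i+j-4) 2 ((u+1)*w) (N-1), hw,
              show (i+j-4) + 2*((u+1)*(N+1-i-j)) = (N-3) + (N-1)*(N+1-i-j) from by
                linear_combination (i+j-N-1) * hu,
              Int.add_mul_emod_self_left]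
          have g3 : (N-1) ∣ (ci + cj) - (N-3) := by
            obtain ⟨t, ht⟩ := Int.ModEq.dvd (show Int.ModEq (N-1) _ _ from g1.trans g2)
            exact ⟨-t, by rw [mul_neg]; omega⟩
          rcases rr_dvd_range2 (N-1) ((ci+cj)-(N-3)) hn g3 (by omega) (by omega) with h|h
          · omega
          · exfalso
            have h5 := rr_modcancel (N-1) (i-2+m) (j-2+m) hn (by omega) (by omega) (by omega)
            omega
end

section
/- Let U be a random variable with values in (0,1] whose tail function Q(x) = P(U > x) satisfies log Q(1−u) = α log u + o(log u) as u → 0⁺ for some α ∈ [0,2), and suppose the essential supremum of U is 1. Let U₁, U₂, ... be i.i.d. copies of U, and for ε > 0 let I_N^ε = {i ≤ N : U_i ≥ 1 − N^{−1/2+ε}}. Then almost surely, log |I_N^ε| = (1 − α/2 + εα) log N + o(log N) as N → ∞. -/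
open MeasureTheory Filter ProbabilityTheory
open scoped ENNReal

set_option linter.unusedSectionVars false
set_option linter.unusedVariables false
set_option maxHeartbeats 1000000

namespace NearTop
variable {Ω : Type*} [MeasurableSpace Ω] {μ : Measure Ω} [IsProbabilityMeasure μ]
  {U : ℕ → Ω → ℝ}

noncomputable def cnt (U : ℕ → Ω → ℝ) (n : ℕ) (t : ℝ) (ω : Ω) : ℕ :=
  ((Finset.range n).filter (fun i => 1 - t ≤ U i ω)).card

lemma cnt_mono {n m : ℕ} {t t' : ℝ} (hnm : n ≤ m) (ht : t ≤ t') (ω : Ω) :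
    cnt U n t ω ≤ cnt U m t' ω := by
  apply Finset.card_le_card
  intro i hi
  simp only [Finset.mem_filter, Finset.mem_range] at *
  exact ⟨lt_of_lt_of_le hi.1 hnm, le_trans (by linarith) hi.2⟩

lemma cnt_markov (hmeas : ∀ i, Measurable (U i)) (hident : ∀ i, μ.map (U i) = μ.map (U 0))
    (n : ℕ) (t : ℝ) {c : ℝ} (hc : 0 < c) :
    μ {ω | c ≤ (cnt U n t ω : ℝ)} ≤
      ENNReal.ofReal (n * (μ {ω | 1 - t ≤ U 0 ω}).toReal / c) := by
  set A : ℕ → Set Ω := fun i => {ω | 1 - t ≤ U i ω} with hA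
  have hAm : ∀ i, MeasurableSet (A i) := fun i => (hmeas i) measurableSet_Ici
  have hAi : ∀ i, μ (A i) = μ (A 0) := by
    intro i
    have h1 : μ (A i) = μ.map (U i) (Set.Ici (1 - t)) := by
      rw [Measure.map_apply (hmeas i) measurableSet_Ici]; rfl
    have h2 : μ (A 0) = μ.map (U 0) (Set.Ici (1 - t)) := by
      rw [Measure.map_apply (hmeas 0) measurableSet_Ici]; rfl
    rw [h1, h2, hident i]
  have hf : (fun ω => ((cnt U n t ω : ℝ≥0∞))) =
      fun ω => ∑ i ∈ Finset.range n, Set.indicator (A i) (fun _ => (1:ℝ≥0∞)) ω := by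
    funext ω
    rw [cnt, Finset.card_filter, Nat.cast_sum]
    refine Finset.sum_congr rfl fun i _ => ?_
    by_cases h : 1 - t ≤ U i ω
    · rw [if_pos h, Set.indicator_of_mem (show ω ∈ A i from h) (fun _ => (1:ℝ≥0∞)),
        Nat.cast_one]
    · rw [if_neg h, Set.indicator_of_notMem (show ω ∉ A i from h) (fun _ => (1:ℝ≥0∞)),
        Nat.cast_zero]
  have hm : Measurable (fun ω => ((cnt U n t ω : ℝ≥0∞))) := by
    rw [hf]
    exact Finset.measurable_sum _ fun i _ => measurable_const.indicator (hAm i)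
  have hlint : ∫⁻ ω, (cnt U n t ω : ℝ≥0∞) ∂μ = n * μ (A 0) := by
    simp_rw [hf]
    rw [lintegral_finset_sum _ (fun i _ => measurable_const.indicator (hAm i))]
    have h1 : ∀ i, ∫⁻ ω, Set.indicator (A i) (fun _ => (1:ℝ≥0∞)) ω ∂μ = μ (A i) := by
      intro i
      rw [lintegral_indicator (hAm i)]
      simp
    rw [Finset.sum_congr rfl (fun i _ => h1 i), Finset.sum_congr rfl (fun i _ => hAi i)]
    simp [Finset.sum_const, Finset.card_range, mul_comm]
  have hcne : (ENNReal.ofReal c) ≠ 0 := by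
    simp [ENNReal.ofReal_eq_zero]; linarith
  have key := meas_ge_le_lintegral_div (μ := μ) hm.aemeasurable hcne ENNReal.ofReal_ne_top
  have hset : {ω | c ≤ (cnt U n t ω : ℝ)} = {ω | ENNReal.ofReal c ≤ (cnt U n t ω : ℝ≥0∞)} := by
    ext ω
    simp only [Set.mem_setOf_eq, ← ENNReal.ofReal_natCast]
    exact (ENNReal.ofReal_le_ofReal_iff (Nat.cast_nonneg _)).symm
  rw [hset]
  refine key.trans (le_of_eq ?_)
  rw [hlint, ENNReal.ofReal_div_of_pos hc, ENNReal.ofReal_mul (Nat.cast_nonneg _),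
    ENNReal.ofReal_natCast, ENNReal.ofReal_toReal (measure_ne_top μ _)]

lemma cnt_cheb (hmeas : ∀ i, Measurable (U i)) (hident : ∀ i, μ.map (U i) = μ.map (U 0))
    (hindep : iIndepFun U μ)
    {n : ℕ} (hn : 0 < n) {t : ℝ} (hp : 0 < (μ {ω | 1 - t ≤ U 0 ω}).toReal) :
    μ {ω | (cnt U n t ω : ℝ) ≤ n * (μ {ω | 1 - t ≤ U 0 ω}).toReal / 2} ≤
      ENNReal.ofReal (4 / (n * (μ {ω | 1 - t ≤ U 0 ω}).toReal)) := by
  set p : ℝ := (μ {ω | 1 - t ≤ U 0 ω}).toReal with hpdef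
  set A : ℕ → Set Ω := fun i => {ω | 1 - t ≤ U i ω} with hA
  have hAm : ∀ i, MeasurableSet (A i) := fun i => (hmeas i) measurableSet_Ici
  have hAi : ∀ i, μ (A i) = μ (A 0) := by
    intro i
    have h1 : μ (A i) = μ.map (U i) (Set.Ici (1 - t)) := by
      rw [Measure.map_apply (hmeas i) measurableSet_Ici]; rfl
    have h2 : μ (A 0) = μ.map (U 0) (Set.Ici (1 - t)) := by
      rw [Measure.map_apply (hmeas 0) measurableSet_Ici]; rfl
    rw [h1, h2, hident i]
  set X : ℕ → Ω → ℝ := fun i => Set.indicator (A i) (fun _ => (1:ℝ)) with hX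
  have hXm : ∀ i, MemLp (X i) 2 μ := fun i =>
    memLp_indicator_const 2 (hAm i) 1 (Or.inr (measure_ne_top μ _))
  have hXint : ∀ i, ∫ ω, X i ω ∂μ = p := by
    intro i
    rw [hX]
    simp only
    rw [integral_indicator_const (1:ℝ) (hAm i), Measure.real, hAi i, smul_eq_mul, mul_one, hpdef]
  set S : Ω → ℝ := ∑ i ∈ Finset.range n, X i with hS
  have hcntS : ∀ ω, (cnt U n t ω : ℝ) = S ω := by
    intro ω
    rw [cnt, Finset.card_filter, Nat.cast_sum, hS]
    rw [Finset.sum_apply]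
    refine Finset.sum_congr rfl fun i _ => ?_
    by_cases h : 1 - t ≤ U i ω
    · rw [if_pos h]
      simp only [hX]
      rw [Set.indicator_of_mem (show ω ∈ A i from h) (fun _ => (1:ℝ)), Nat.cast_one]
    · rw [if_neg h]
      simp only [hX]
      rw [Set.indicator_of_notMem (show ω ∉ A i from h) (fun _ => (1:ℝ)), Nat.cast_zero]
  have hS2 : MemLp S 2 μ := memLp_finsetSum' _ (fun i _ => hXm i)
  have hES : ∫ ω, S ω ∂μ = n * p := by
    rw [hS]
    simp only [Finset.sum_apply]
    rw [integral_finset_sum _ (fun i _ => (hXm i).integrable one_le_two)]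
    simp only [hXint, Finset.sum_const, Finset.card_range, nsmul_eq_mul]
  have hVarX : ∀ i, variance (X i) μ ≤ p := by
    intro i
    rw [variance_eq_sub (hXm i)]
    have hsq : (X i) ^ 2 = X i := by
      funext ω
      simp only [Pi.pow_apply, hX]
      by_cases h : ω ∈ A i
      · rw [Set.indicator_of_mem h (fun _ => (1:ℝ))]; norm_num
      · rw [Set.indicator_of_notMem h (fun _ => (1:ℝ))]; norm_num
    rw [hsq, hXint i]
    nlinarith [hXint i, hp]
  have hpair : Set.Pairwise ↑(Finset.range n) (fun i j => IndepFun (X i) (X j) μ) := by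
    intro i _ j _ hij
    have h1 : IndepFun (U i) (U j) μ := hindep.indepFun hij
    have h2 : Measurable (Set.indicator (Set.Ici (1 - t)) (fun _ => (1:ℝ))) :=
      measurable_const.indicator measurableSet_Ici
    have h3 := h1.comp h2 h2
    have hcomp : ∀ l, (Set.indicator (Set.Ici (1 - t)) (fun _ => (1:ℝ))) ∘ U l = X l := by
      intro l
      funext ω
      simp only [Function.comp_apply, hX, Set.indicator_apply, Set.mem_Ici, Set.mem_setOf_eq, hA]
    rwa [hcomp i, hcomp j] at h3
  have hVarS : variance S μ ≤ n * p := by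
    rw [hS, IndepFun.variance_sum (fun i _ => hXm i) hpair]
    calc ∑ i ∈ Finset.range n, variance (X i) μ ≤ ∑ _i ∈ Finset.range n, p :=
          Finset.sum_le_sum (fun i _ => hVarX i)
      _ = n * p := by simp [Finset.sum_const, Finset.card_range, nsmul_eq_mul]
  have hnp : 0 < (n:ℝ) * p := by positivity
  have hc2 : (0:ℝ) < n * p / 2 := by linarith
  have cheb := meas_ge_le_variance_div_sq (μ := μ) hS2 hc2
  have hsub : {ω | (cnt U n t ω : ℝ) ≤ n * p / 2} ⊆ {ω | n * p / 2 ≤ |S ω - ∫ ω, S ω ∂μ|} := by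
    intro ω hω
    simp only [Set.mem_setOf_eq] at *
    rw [hcntS ω] at hω
    rw [hES]
    rw [abs_sub_comm]
    calc n * p / 2 = n * p - n * p / 2 := by ring
      _ ≤ n * p - S ω := by linarith
      _ ≤ |n * p - S ω| := le_abs_self _
  refine (measure_mono hsub).trans (cheb.trans ?_)
  refine ENNReal.ofReal_le_ofReal ?_
  rw [div_le_div_iff₀ (by positivity) hnp]
  have hv0 : 0 ≤ variance S μ := variance_nonneg _ _
  nlinarith [hVarS, hnp]

lemma bc_aux {s : ℕ → Set Ω} {C r : ℝ} (hC : 0 ≤ C) (hr0 : 0 ≤ r) (hr1 : r < 1)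
    (h : ∀ᶠ k in atTop, μ (s k) ≤ ENNReal.ofReal (C * r ^ k)) :
    ∀ᵐ ω ∂μ, ∀ᶠ k in atTop, ω ∉ s k := by
  obtain ⟨K, hK⟩ := eventually_atTop.mp h
  have hsum : (∑' k, μ (s (K + k))) ≠ ∞ := by
    have hb : ∀ k, μ (s (K + k)) ≤ ENNReal.ofReal C * ENNReal.ofReal r ^ k := by
      intro k
      refine (hK (K + k) (Nat.le_add_right _ _)).trans ?_
      rw [← ENNReal.ofReal_pow hr0, ← ENNReal.ofReal_mul hC]
      refine ENNReal.ofReal_le_ofReal ?_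
      have : r ^ (K + k) ≤ r ^ k := by
        rw [pow_add]
        calc r ^ K * r ^ k ≤ 1 * r ^ k := by
              refine mul_le_mul_of_nonneg_right (pow_le_one₀ hr0 hr1.le) (by positivity)
          _ = r ^ k := one_mul _
      exact mul_le_mul_of_nonneg_left this hC
    refine ne_top_of_le_ne_top ?_ (ENNReal.tsum_le_tsum hb)
    rw [ENNReal.tsum_mul_left, ENNReal.tsum_geometric]
    refine ENNReal.mul_ne_top ENNReal.ofReal_ne_top ?_
    rw [Ne, ENNReal.inv_eq_top, tsub_eq_zero_iff_le]
    rw [not_le]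
    exact ENNReal.ofReal_lt_one.mpr hr1
  filter_upwards [ae_eventually_notMem hsum] with ω hω
  obtain ⟨N, hN⟩ := eventually_atTop.mp hω
  rw [eventually_atTop]
  refine ⟨K + N, fun m hm => ?_⟩
  have := hN (m - K) (by omega)
  rwa [Nat.add_sub_cancel' (by omega : K ≤ m)] at this

/-- tail asymptotics for the closed tail `Q'(u) = μ(U₀ ≥ 1-u)`. -/
lemma tailQ_bound (hmeas : ∀ i, Measurable (U i))
    (hsupp : ∀ δ > (0:ℝ), 0 < μ {ω | 1 - δ < U 0 ω})
    {α : ℝ}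
    (hA : Tendsto (fun u : ℝ =>
        Real.log ((μ {ω | 1 - u < U 0 ω}).toReal) / Real.log u)
      (nhdsWithin 0 (Set.Ioi 0)) (nhds α))
    {δ : ℝ} (hδ : 0 < δ) :
    ∀ᶠ u in nhdsWithin (0:ℝ) (Set.Ioi 0),
      u ^ (α + δ) ≤ (μ {ω | 1 - u ≤ U 0 ω}).toReal ∧
      (μ {ω | 1 - u ≤ U 0 ω}).toReal ≤ u ^ (α - δ) := by
  set Q : ℝ → ℝ := fun u => (μ {ω | 1 - u < U 0 ω}).toReal with hQ
  set Q' : ℝ → ℝ := fun u => (μ {ω | 1 - u ≤ U 0 ω}).toReal with hQ'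
  have hQpos : ∀ u : ℝ, 0 < u → 0 < Q u := by
    intro u hu
    exact ENNReal.toReal_pos (hsupp u hu).ne' (measure_ne_top μ _)
  have hQle : ∀ u, Q u ≤ Q' u := by
    intro u
    refine ENNReal.toReal_mono (measure_ne_top μ _) (measure_mono ?_)
    intro ω hω
    simp only [Set.mem_setOf_eq] at *
    exact hω.le
  have hQ'le : ∀ u : ℝ, 0 < u → Q' u ≤ Q (2 * u) := by
    intro u hu
    refine ENNReal.toReal_mono (measure_ne_top μ _) (measure_mono ?_)
    intro ω hω
    simp only [Set.mem_setOf_eq] at *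
    linarith
  have hQ1 : ∀ u, Q' u ≤ 1 := by
    intro u
    have := prob_le_one (μ := μ) (s := {ω | 1 - u ≤ U 0 ω})
    calc Q' u ≤ (1:ℝ≥0∞).toReal := ENNReal.toReal_mono (by simp) this
      _ = 1 := by simp
  -- membership facts
  have hmem : ∀ᶠ u in nhdsWithin (0:ℝ) (Set.Ioi 0), u ∈ Set.Ioo (0:ℝ) (1/2) :=
    Ioo_mem_nhdsGT_of_mem ⟨le_refl _, by norm_num⟩
  -- bound from hA at u
  have h1 : ∀ᶠ u in nhdsWithin (0:ℝ) (Set.Ioi 0),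
      Real.log (Q u) / Real.log u ≤ α + δ / 2 := by
    have := hA.eventually (eventually_le_nhds (by linarith : α < α + δ / 2))
    exact this
  -- bound from hA at 2u
  have htwo : Tendsto (fun u : ℝ => 2 * u) (nhdsWithin (0:ℝ) (Set.Ioi 0))
      (nhdsWithin (0:ℝ) (Set.Ioi 0)) := by
    refine tendsto_nhdsWithin_of_tendsto_nhds_of_eventually_within _ ?_ ?_
    · have : Tendsto (fun u : ℝ => 2 * u) (nhds 0) (nhds (2 * 0)) :=
        (continuous_const.mul continuous_id).tendsto 0
      simpa using this.mono_left nhdsWithin_le_nhds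
    · filter_upwards [self_mem_nhdsWithin] with u hu
      simp only [Set.mem_Ioi] at *
      linarith
  have h2 : ∀ᶠ u in nhdsWithin (0:ℝ) (Set.Ioi 0),
      α - δ / 4 ≤ Real.log (Q (2 * u)) / Real.log (2 * u) := by
    have h := hA.eventually (eventually_ge_nhds (by linarith : α - δ / 4 < α))
    exact htwo.eventually h
  -- smallness of u^(3δ/4)
  have h3 : ∀ᶠ u in nhdsWithin (0:ℝ) (Set.Ioi 0),
      u ^ (3 * δ / 4) < 2 ^ (-(α - δ / 4)) := by
    have hcont : Tendsto (fun u : ℝ => u ^ (3 * δ / 4)) (nhdsWithin (0:ℝ) (Set.Ioi 0))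
        (nhds 0) := by
      have : Tendsto (fun u : ℝ => u ^ (3 * δ / 4)) (nhds 0) (nhds ((0:ℝ) ^ (3 * δ / 4))) :=
        (Real.continuousAt_rpow_const 0 _ (Or.inr (by positivity))).tendsto
      rw [Real.zero_rpow (by positivity)] at this
      exact this.mono_left nhdsWithin_le_nhds
    exact hcont.eventually (eventually_lt_nhds (by positivity))
  filter_upwards [hmem, h1, h2, h3] with u hu hu1 hu2 hu3
  obtain ⟨hu0, hult⟩ := hu
  have hlogu : Real.log u < 0 := Real.log_neg hu0 (by linarith)
  constructor
  · -- lower bound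
    have hQu : 0 < Q u := hQpos u hu0
    have : Real.log (Q u) ≥ (α + δ / 2) * Real.log u := by
      rw [div_le_iff_of_neg hlogu] at hu1
      linarith
    have hexp : u ^ (α + δ / 2) ≤ Q u := by
      rw [Real.rpow_def_of_pos hu0, mul_comm (Real.log u)]
      exact (Real.exp_le_exp.mpr this).trans_eq (Real.exp_log hQu)
    refine le_trans ?_ (le_trans hexp (hQle u))
    exact Real.rpow_le_rpow_of_exponent_ge hu0 (by linarith) (by linarith)
  · -- upper bound
    have h2u0 : (0:ℝ) < 2 * u := by linarith
    have h2u1 : 2 * u < 1 := by linarith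
    have hlog2u : Real.log (2 * u) < 0 := Real.log_neg h2u0 h2u1
    have hQ2u : 0 < Q (2 * u) := hQpos _ h2u0
    have : Real.log (Q (2 * u)) ≤ (α - δ / 4) * Real.log (2 * u) := by
      rw [le_div_iff_of_neg hlog2u] at hu2
      linarith
    have hexp : Q (2 * u) ≤ (2 * u) ^ (α - δ / 4) := by
      rw [Real.rpow_def_of_pos h2u0, mul_comm (Real.log (2 * u))]
      exact ((Real.exp_log hQ2u).symm.trans_le (Real.exp_le_exp.mpr this))
    refine le_trans (hQ'le u hu0) (hexp.trans ?_)
    rw [Real.mul_rpow (by norm_num) hu0.le]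
    have hsplit : u ^ (α - δ / 4) = u ^ (α - δ) * u ^ (3 * δ / 4) := by
      rw [← Real.rpow_add hu0]
      ring_nf
    rw [hsplit]
    rw [← mul_assoc, mul_comm ((2:ℝ) ^ (α - δ / 4)) _, mul_assoc]
    calc u ^ (α - δ) * ((2:ℝ) ^ (α - δ / 4) * u ^ (3 * δ / 4))
        ≤ u ^ (α - δ) * 1 := by
          refine mul_le_mul_of_nonneg_left ?_ (by positivity)
          have : (2:ℝ) ^ (α - δ / 4) * u ^ (3 * δ / 4) <
              (2:ℝ) ^ (α - δ / 4) * 2 ^ (-(α - δ / 4)) := by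
            refine mul_lt_mul_of_pos_left hu3 (by positivity)
          rw [← Real.rpow_add (by norm_num)] at this
          simpa using this.le
      _ = u ^ (α - δ) := mul_one _

lemma main_aux (hmeas : ∀ i, Measurable (U i))
    (hident : ∀ i, μ.map (U i) = μ.map (U 0))
    (hindep : iIndepFun U μ)
    (hsupp : ∀ δ > (0:ℝ), 0 < μ {ω | 1 - δ < U 0 ω})
    {α : ℝ} (hα0 : 0 ≤ α) (hα2 : α < 2)
    (hA : Tendsto (fun u : ℝ =>
        Real.log ((μ {ω | 1 - u < U 0 ω}).toReal) / Real.log u)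
      (nhdsWithin 0 (Set.Ioi 0)) (nhds α))
    {ε : ℝ} (hε : 0 < ε) (hε' : ε < 1 / 2)
    {δ : ℝ} (hδ0 : 0 < δ) (hδγ : δ < 1 - α / 2 + ε * α) :
    ∀ᵐ ω ∂μ, ∀ᶠ N : ℕ in atTop,
      |Real.log (cnt U N ((N:ℝ) ^ (-(1/2:ℝ) + ε)) ω) / Real.log N
        - (1 - α / 2 + ε * α)| ≤ 2 * δ := by
  have hβneg : -(1/2:ℝ) + ε < 0 := by linarith
  set β : ℝ := -(1/2:ℝ) + ε with hβdef
  set γ : ℝ := 1 - α / 2 + ε * α with hγdef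
  have hγβ : γ = 1 + β * α := by rw [hγdef, hβdef]; ring
  have hβlb : -(1/2:ℝ) < β := by rw [hβdef]; linarith
  have hγpos : 0 < γ := by
    rw [hγβ]; nlinarith
  have hδγ' : δ < γ := hδγ
  clear_value β γ
  -- the dyadic thresholds
  set u : ℕ → ℝ := fun k => ((2:ℝ) ^ β) ^ k with hudef
  have h2βpos : 0 < (2:ℝ) ^ β := Real.rpow_pos_of_pos two_pos β
  have h2βlt : (2:ℝ) ^ β < 1 := Real.rpow_lt_one_of_one_lt_of_neg one_lt_two hβneg
  have hupos : ∀ k, 0 < u k := fun k => pow_pos h2βpos k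
  have hurpow : ∀ k : ℕ, u k = (2:ℝ) ^ ((k:ℝ) * β) := by
    intro k
    rw [hudef]
    rw [mul_comm, Real.rpow_mul (by norm_num), Real.rpow_natCast]
  have hueq : ∀ k : ℕ, (((2:ℕ) ^ k : ℕ) : ℝ) ^ β = u k := by
    intro k
    rw [hurpow]
    push_cast
    rw [← Real.rpow_natCast (2:ℝ) k, ← Real.rpow_mul (by norm_num)]
  have hupowc : ∀ (k : ℕ) (c : ℝ), u k ^ c = (2:ℝ) ^ ((k:ℝ) * β * c) := by
    intro k c
    rw [hurpow, ← Real.rpow_mul (by norm_num)]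
  have hutend : Tendsto u atTop (nhdsWithin (0:ℝ) (Set.Ioi 0)) := by
    refine tendsto_nhdsWithin_of_tendsto_nhds_of_eventually_within _ ?_ ?_
    · exact tendsto_pow_atTop_nhds_zero_of_lt_one h2βpos.le h2βlt
    · exact Eventually.of_forall fun k => hupos k
  -- closed tail probabilities at u (k+1)
  set p : ℕ → ℝ := fun k => (μ {ω | 1 - u (k+1) ≤ U 0 ω}).toReal with hpdef
  have hppos : ∀ k, 0 < p k := by
    intro k
    have h1 : 0 < μ {ω | 1 - u (k+1) < U 0 ω} := hsupp _ (hupos (k+1))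
    have h2 : μ {ω | 1 - u (k+1) < U 0 ω} ≤ μ {ω | 1 - u (k+1) ≤ U 0 ω} := by
      refine measure_mono ?_
      intro ω hω
      simp only [Set.mem_setOf_eq] at *
      exact hω.le
    rw [hpdef]
    exact ENNReal.toReal_pos (lt_of_lt_of_le h1 h2).ne' (measure_ne_top μ _)
  have htail := hutend.eventually (tailQ_bound hmeas hsupp hA (δ := δ/2) (by linarith))
  have htail' := (hutend.comp (tendsto_add_atTop_nat 1)).eventually
      (tailQ_bound hmeas hsupp hA (δ := δ/2) (by linarith))
  -- ###### upper Borel–Cantelli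
  have hBCU : ∀ᵐ ω ∂μ, ∀ᶠ k in atTop,
      (cnt U (2^(k+1)) (u k) ω : ℝ) < (2:ℝ) ^ ((k:ℝ) * (γ + δ)) := by
    have hev : ∀ᶠ k : ℕ in atTop, μ {ω | (2:ℝ) ^ ((k:ℝ) * (γ + δ)) ≤ (cnt U (2^(k+1)) (u k) ω : ℝ)}
        ≤ ENNReal.ofReal (2 * ((2:ℝ) ^ (-(δ/2))) ^ k) := by
      filter_upwards [htail] with k hk
      refine (cnt_markov hmeas hident (2^(k+1)) (u k)
        (Real.rpow_pos_of_pos two_pos _)).trans (ENNReal.ofReal_le_ofReal ?_)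
      have hQle : (μ {ω | 1 - u k ≤ U 0 ω}).toReal ≤ (2:ℝ) ^ ((k:ℝ) * β * (α - δ/2)) := by
        rw [← hupowc]
        exact hk.2
      have hQ0 : 0 ≤ (μ {ω | 1 - u k ≤ U 0 ω}).toReal := ENNReal.toReal_nonneg
      have hcast : (((2:ℕ)^(k+1) : ℕ) : ℝ) = (2:ℝ) ^ (((k:ℝ) + 1)) := by
        push_cast
        rw [← Real.rpow_natCast (2:ℝ) (k+1)]
        push_cast
        ring_nf
      calc ((2^(k+1) : ℕ) : ℝ) * (μ {ω | 1 - u k ≤ U 0 ω}).toReal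
            / (2:ℝ) ^ ((k:ℝ) * (γ + δ))
          ≤ (2:ℝ) ^ ((k:ℝ) + 1) * (2:ℝ) ^ ((k:ℝ) * β * (α - δ/2))
            / (2:ℝ) ^ ((k:ℝ) * (γ + δ)) := by
            rw [hcast]
            gcongr
        _ = (2:ℝ) ^ (((k:ℝ) + 1) + (k:ℝ) * β * (α - δ/2) - (k:ℝ) * (γ + δ)) := by
            rw [← Real.rpow_add two_pos, ← Real.rpow_sub two_pos]
        _ ≤ (2:ℝ) ^ (1 + (k:ℝ) * (-(δ/2))) := by
            refine Real.rpow_le_rpow_of_exponent_le one_le_two ?_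
            have hk0 : (0:ℝ) ≤ (k:ℝ) := Nat.cast_nonneg k
            rw [hγβ]
            nlinarith [mul_nonneg hk0 hδ0.le]
        _ = 2 * ((2:ℝ) ^ (-(δ/2))) ^ k := by
            rw [Real.rpow_add two_pos, Real.rpow_one, ← Real.rpow_natCast ((2:ℝ) ^ (-(δ/2))) k,
              ← Real.rpow_mul (by norm_num), mul_comm ((k:ℕ):ℝ) (-(δ/2))]
    have hae := bc_aux (μ := μ) (by norm_num : (0:ℝ) ≤ 2)
      (Real.rpow_pos_of_pos two_pos _).le
      (Real.rpow_lt_one_of_one_lt_of_neg one_lt_two (by linarith)) hev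
    filter_upwards [hae] with ω hω
    filter_upwards [hω] with k hk
    exact not_le.mp hk
  -- ###### lower Borel–Cantelli
  have hBCL : ∀ᵐ ω ∂μ, ∀ᶠ k in atTop,
      ((2^k : ℕ) : ℝ) * p k / 2 < (cnt U (2^k) (u (k+1)) ω : ℝ) := by
    have hev : ∀ᶠ k : ℕ in atTop, μ {ω | (cnt U (2^k) (u (k+1)) ω : ℝ) ≤ ((2^k:ℕ):ℝ) * p k / 2}
        ≤ ENNReal.ofReal ((4 * (2:ℝ) ^ (-(β * (α + δ/2)))) * ((2:ℝ) ^ (-(3*γ/4))) ^ k) := by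
      filter_upwards [htail'] with k hk
      refine (cnt_cheb hmeas hident hindep (pow_pos two_pos k) (hppos k)).trans
        (ENNReal.ofReal_le_ofReal ?_)
      have hkcast : (((2:ℕ)^k : ℕ) : ℝ) = (2:ℝ) ^ ((k:ℝ)) := by
        push_cast
        rw [← Real.rpow_natCast (2:ℝ) k]
      have hplb : (2:ℝ) ^ (((k:ℝ)+1) * β * (α + δ/2)) ≤ p k := by
        have := hk.1
        rwa [Function.comp_apply, hupowc (k+1) (α + δ/2), Nat.cast_add, Nat.cast_one] at this
      have hnp_lb : (2:ℝ) ^ ((k:ℝ) + ((k:ℝ)+1) * β * (α + δ/2)) ≤ ((2^k:ℕ):ℝ) * p k := by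
        rw [hkcast, Real.rpow_add two_pos]
        exact mul_le_mul_of_nonneg_left hplb (Real.rpow_pos_of_pos two_pos _).le
      have hnp_pos : (0:ℝ) < ((2^k:ℕ):ℝ) * p k := by
        have := hppos k
        positivity
      calc 4 / (((2^k:ℕ):ℝ) * p k)
          ≤ 4 / (2:ℝ) ^ ((k:ℝ) + ((k:ℝ)+1) * β * (α + δ/2)) := by
            gcongr
        _ = 4 * (2:ℝ) ^ (-((k:ℝ) + ((k:ℝ)+1) * β * (α + δ/2))) := by
            rw [Real.rpow_neg (by norm_num), div_eq_mul_inv]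
        _ ≤ 4 * (2:ℝ) ^ (-(β * (α + δ/2)) + (k:ℝ) * (-(3*γ/4))) := by
            have hk0 : (0:ℝ) ≤ (k:ℝ) := Nat.cast_nonneg k
            refine mul_le_mul_of_nonneg_left
              (Real.rpow_le_rpow_of_exponent_le one_le_two ?_) (by norm_num)
            have hkey : 0 ≤ 1 + β * α + 2 * β * δ := by
              nlinarith [mul_nonneg (by linarith : (0:ℝ) ≤ β + 1/2) hδ0.le, hδγ', hγβ]
            
            rw [hγβ]
            nlinarith [mul_nonneg hk0 hkey]
        _ = (4 * (2:ℝ) ^ (-(β * (α + δ/2)))) * ((2:ℝ) ^ (-(3*γ/4))) ^ k := by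
            rw [Real.rpow_add two_pos, ← Real.rpow_natCast ((2:ℝ) ^ (-(3*γ/4))) k,
              ← Real.rpow_mul (by norm_num), mul_comm ((k:ℕ):ℝ) (-(3*γ/4))]
            ring
    have hae := bc_aux (μ := μ)
      (by positivity : (0:ℝ) ≤ 4 * (2:ℝ) ^ (-(β * (α + δ/2))))
      (Real.rpow_pos_of_pos two_pos _).le
      (Real.rpow_lt_one_of_one_lt_of_neg one_lt_two (by nlinarith)) hev
    filter_upwards [hae] with ω hω
    filter_upwards [hω] with k hk
    exact not_le.mp hk
  -- deterministic lower bound on 2^k * p k / 2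
  have hdetk : ∀ᶠ k : ℕ in atTop,
      (2:ℝ) ^ ((k:ℝ) * (γ - δ/2)) ≤ ((2^k:ℕ):ℝ) * p k / 2 := by
    have hkbig : ∀ᶠ k : ℕ in atTop, 1 - β * (α + δ/2) ≤ (k:ℝ) * (δ/4) := by
      refine Tendsto.eventually_ge_atTop ?_ _
      exact (tendsto_natCast_atTop_atTop).atTop_mul_const (by linarith)
    filter_upwards [htail', hkbig] with k hk hkb
    have hkcast : (((2:ℕ)^k : ℕ) : ℝ) = (2:ℝ) ^ ((k:ℝ)) := by
      push_cast
      rw [← Real.rpow_natCast (2:ℝ) k]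
    have hplb : (2:ℝ) ^ (((k:ℝ)+1) * β * (α + δ/2)) ≤ p k := by
      have := hk.1
      rwa [Function.comp_apply, hupowc (k+1) (α + δ/2), Nat.cast_add, Nat.cast_one] at this
    have h1 : (2:ℝ) ^ ((k:ℝ) + ((k:ℝ)+1) * β * (α + δ/2) - 1) ≤ ((2^k:ℕ):ℝ) * p k / 2 := by
      rw [Real.rpow_sub two_pos, Real.rpow_one, hkcast, Real.rpow_add two_pos]
      gcongr
    refine le_trans (Real.rpow_le_rpow_of_exponent_le one_le_two ?_) h1
    have hk0 : (0:ℝ) ≤ (k:ℝ) := Nat.cast_nonneg k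
    rw [hγβ]
    nlinarith [mul_nonneg hk0 hδ0.le]
  -- ###### combine
  have hklog : Tendsto (fun N : ℕ => Nat.log 2 N) atTop atTop := by
    refine tendsto_atTop_atTop.mpr fun K => ⟨2^K, fun N hN => ?_⟩
    have hN0 : N ≠ 0 := by
      have : 1 ≤ 2^K := Nat.one_le_two_pow
      omega
    exact (Nat.le_log_iff_pow_le one_lt_two hN0).mpr hN
  have hlogN : Tendsto (fun N : ℕ => Real.log N) atTop atTop :=
    Real.tendsto_log_atTop.comp tendsto_natCast_atTop_atTop
  have hE2 : ∀ᶠ N : ℕ in atTop, (γ - δ/2) * Real.log 2 ≤ (δ/2) * Real.log N := by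
    have := hlogN.eventually_ge_atTop ((γ - δ/2) * Real.log 2 / (δ/2))
    filter_upwards [this] with N hN
    rw [div_le_iff₀ (by linarith : (0:ℝ) < δ/2)] at hN
    linarith [hN]
  filter_upwards [hBCU, hBCL] with ω hωU hωL
  filter_upwards [eventually_ge_atTop 2, hE2,
    hklog.eventually (hωU.and (hωL.and hdetk))] with N hN2 hNE2 hk
  obtain ⟨hkU, hkL, hkD⟩ := hk
  set k := Nat.log 2 N with hkdef
  have hNpos : 0 < N := by omega
  have h2kN : 2^k ≤ N := Nat.pow_log_le_self 2 (by omega)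
  have hN2k : N < 2^(k+1) := Nat.lt_pow_succ_log_self one_lt_two N
  have hlogNpos : 0 < Real.log N := by
    refine Real.log_pos ?_
    exact_mod_cast hN2
  -- threshold comparisons
  have hthru : ((N:ℝ)) ^ β ≤ u k := by
    rw [← hueq k]
    refine Real.rpow_le_rpow_of_nonpos ?_ ?_ hβneg.le
    · positivity
    · exact_mod_cast h2kN
  have huthr : u (k+1) ≤ ((N:ℝ)) ^ β := by
    rw [← hueq (k+1)]
    refine Real.rpow_le_rpow_of_nonpos ?_ ?_ hβneg.le
    · exact_mod_cast hNpos
    · exact_mod_cast hN2k.le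
  -- counting comparisons
  have hcnt_up : (cnt U N ((N:ℝ) ^ β) ω : ℝ) ≤ (cnt U (2^(k+1)) (u k) ω : ℝ) := by
    exact_mod_cast cnt_mono hN2k.le hthru ω
  have hcnt_lo : (cnt U (2^k) (u (k+1)) ω : ℝ) ≤ (cnt U N ((N:ℝ) ^ β) ω : ℝ) := by
    exact_mod_cast cnt_mono h2kN huthr ω
  have hcnt_pos : (0:ℝ) < (cnt U N ((N:ℝ) ^ β) ω : ℝ) := by
    refine lt_of_lt_of_le (lt_of_le_of_lt ?_ hkL) hcnt_lo
    positivity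
  -- logarithm comparisons
  have hklog2N : (k:ℝ) * Real.log 2 ≤ Real.log N := by
    have h1 : Real.log (((2:ℕ)^k : ℕ) : ℝ) ≤ Real.log N := by
      refine (Real.log_le_log_iff (by positivity) (by exact_mod_cast hNpos)).mpr ?_
      exact_mod_cast h2kN
    rwa [show (((2:ℕ)^k : ℕ) : ℝ) = (2:ℝ)^k by push_cast; ring, Real.log_pow] at h1
  have hlogN2k : Real.log N ≤ ((k:ℝ) + 1) * Real.log 2 := by
    have h1 : Real.log (N:ℝ) ≤ Real.log (((2:ℕ)^(k+1) : ℕ) : ℝ) := by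
      refine (Real.log_le_log_iff (by exact_mod_cast hNpos) (by positivity)).mpr ?_
      exact_mod_cast hN2k.le
    rwa [show (((2:ℕ)^(k+1) : ℕ) : ℝ) = (2:ℝ)^(k+1) by push_cast; ring, Real.log_pow,
      Nat.cast_add, Nat.cast_one] at h1
  have hlog2pos : (0:ℝ) < Real.log 2 := Real.log_pos one_lt_two
  -- upper bound on log cnt
  have hup : Real.log (cnt U N ((N:ℝ) ^ β) ω) ≤ (γ + δ) * Real.log N := by
    have h1 : Real.log (cnt U N ((N:ℝ) ^ β) ω) ≤ Real.log ((2:ℝ) ^ ((k:ℝ) * (γ + δ))) := by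
      refine (Real.log_le_log_iff hcnt_pos (Real.rpow_pos_of_pos two_pos _)).mpr ?_
      exact le_of_lt (lt_of_le_of_lt hcnt_up hkU)
    rw [Real.log_rpow two_pos] at h1
    refine h1.trans ?_
    have hγδ : 0 ≤ γ + δ := by linarith
    calc (k:ℝ) * (γ + δ) * Real.log 2 = (γ + δ) * ((k:ℝ) * Real.log 2) := by ring
      _ ≤ (γ + δ) * Real.log N := by
          exact mul_le_mul_of_nonneg_left hklog2N hγδ
  -- lower bound on log cnt
  have hlo : (γ - δ) * Real.log N - (γ - δ/2) * Real.log 2 ≤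
      Real.log (cnt U N ((N:ℝ) ^ β) ω) := by
    have h1 : Real.log ((2:ℝ) ^ ((k:ℝ) * (γ - δ/2))) ≤ Real.log (cnt U N ((N:ℝ) ^ β) ω) := by
      refine (Real.log_le_log_iff (Real.rpow_pos_of_pos two_pos _) hcnt_pos).mpr ?_
      exact le_trans hkD (le_trans hkL.le hcnt_lo)
    rw [Real.log_rpow two_pos] at h1
    refine le_trans ?_ h1
    have h2 : Real.log N - Real.log 2 ≤ (k:ℝ) * Real.log 2 := by linarith [hlogN2k]
    have h3 : (γ - δ/2) * (Real.log N - Real.log 2) ≤ (γ - δ/2) * ((k:ℝ) * Real.log 2) := by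
      exact mul_le_mul_of_nonneg_left h2 (by linarith)
    calc (γ - δ) * Real.log N - (γ - δ/2) * Real.log 2
        ≤ (γ - δ/2) * Real.log N - (γ - δ/2) * Real.log 2 := by
          nlinarith [mul_nonneg hδ0.le hlogNpos.le]
      _ = (γ - δ/2) * (Real.log N - Real.log 2) := by ring
      _ ≤ (k:ℝ) * (γ - δ/2) * Real.log 2 := by rw [show (k:ℝ) * (γ - δ/2) * Real.log 2 = (γ - δ/2) * ((k:ℝ) * Real.log 2) by ring]; exact h3
  -- conclude
  rw [abs_le]
  have hfl : γ - 2*δ ≤ Real.log (cnt U N ((N:ℝ) ^ β) ω) / Real.log N := by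
    rw [le_div_iff₀ hlogNpos]
    calc (γ - 2*δ) * Real.log N ≤ (γ - δ) * Real.log N - (γ - δ/2) * Real.log 2 := by
          nlinarith [mul_nonneg hδ0.le hlogNpos.le, hNE2, hlog2pos]
      _ ≤ Real.log (cnt U N ((N:ℝ) ^ β) ω) := hlo
  have hfu : Real.log (cnt U N ((N:ℝ) ^ β) ω) / Real.log N ≤ γ + 2*δ := by
    rw [div_le_iff₀ hlogNpos]
    calc Real.log (cnt U N ((N:ℝ) ^ β) ω) ≤ (γ + δ) * Real.log N := hup
      _ ≤ (γ + 2*δ) * Real.log N := by nlinarith [mul_nonneg hδ0.le hlogNpos.le]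
  exact ⟨by linarith, by linarith⟩

end NearTop

/-- Almost-sure count of the "near-top" players: under Assumption (A) with
exponent `α ∈ [0,2)`, the number of indices `i ≤ N` with
`U_i ≥ 1 - N^{-1/2+ε}` satisfies `log |I_N^ε| = (1-α/2+εα) log N + o(log N)`. -/
theorem near_top_count {Ω : Type*} [MeasurableSpace Ω] (μ : Measure Ω)
    [IsProbabilityMeasure μ] (U : ℕ → Ω → ℝ) (hmeas : ∀ i, Measurable (U i))
    (hindep : iIndepFun U μ)
    (hident : ∀ i, μ.map (U i) = μ.map (U 0))
    (hval : ∀ i ω, 0 < U i ω ∧ U i ω ≤ 1)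
    (hsupp : ∀ δ > (0:ℝ), 0 < μ {ω | 1 - δ < U 0 ω})
    (α : ℝ) (hα0 : 0 ≤ α) (hα2 : α < 2)
    -- Assumption (A): `log Q(1-u) = α log u + o(log u)` as `u → 0⁺`
    (hA : Tendsto (fun u : ℝ =>
        Real.log ((μ {ω | 1 - u < U 0 ω}).toReal) / Real.log u)
      (nhdsWithin 0 (Set.Ioi 0)) (nhds α))
    (ε : ℝ) (hε : 0 < ε) (hε' : ε < 1 / 2) :
    ∀ᵐ ω ∂μ, Tendsto (fun N : ℕ =>
        Real.log (((Finset.range N).filter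
          (fun i => 1 - (N:ℝ) ^ (-(1/2:ℝ) + ε) ≤ U i ω)).card) / Real.log N)
      atTop (nhds (1 - α / 2 + ε * α)) := by
  have hγpos : 0 < 1 - α / 2 + ε * α := by nlinarith
  have haux : ∀ m : ℕ, ∀ᵐ ω ∂μ, ∀ᶠ N : ℕ in atTop,
      |Real.log (NearTop.cnt U N ((N:ℝ) ^ (-(1/2:ℝ) + ε)) ω) / Real.log N
        - (1 - α / 2 + ε * α)| ≤
        2 * ((1 - α / 2 + ε * α) / (2 * ((m:ℝ) + 1))) := by
    intro m
    refine NearTop.main_aux hmeas hident hindep hsupp hα0 hα2 hA hε hε' ?_ ?_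
    · positivity
    · rw [div_lt_iff₀ (by positivity)]
      nlinarith [Nat.cast_nonneg (α := ℝ) m]
  filter_upwards [ae_all_iff.mpr haux] with ω hω
  have hfeq : (fun N : ℕ =>
      Real.log (((Finset.range N).filter
        (fun i => 1 - (N:ℝ) ^ (-(1/2:ℝ) + ε) ≤ U i ω)).card) / Real.log N) =
      fun N : ℕ =>
        Real.log (NearTop.cnt U N ((N:ℝ) ^ (-(1/2:ℝ) + ε)) ω) / Real.log N := rfl
  rw [hfeq, Metric.tendsto_atTop]
  intro e he
  obtain ⟨m, hm⟩ := exists_nat_gt ((1 - α / 2 + ε * α) / e)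
  have hb : 2 * ((1 - α / 2 + ε * α) / (2 * ((m:ℝ) + 1))) < e := by
    rw [div_lt_iff₀ he] at hm
    rw [mul_div_assoc']
    rw [div_lt_iff₀ (by positivity)]
    nlinarith [Nat.cast_nonneg (α := ℝ) m, he]
  obtain ⟨B, hB⟩ := eventually_atTop.mp (hω m)
  refine ⟨B, fun n hn => ?_⟩
  rw [Real.dist_eq]
  exact lt_of_le_of_lt (hB n hn) hb
end

section
/- Let 0 < β < 1/2 and suppose Q : [x₀,∞) → (0,1] is differentiable with derivative −F′ (F = 1 − Q), that Q^{1/2−β} is convex on [x₀,∞) (so F′/Q^{1/2+β} is nonincreasing there), and that ∫₀^∞ y² F′(y) dy < ∞. Fix c ∈ (0,1) with x₀/c in the domain. Then there exists a constant C (depending on β, c and the distribution) such that for all x ≥ x₀/c: x^{2−2β} F′(x)/Q(x)^{1/2+β} ≤ C (log(Q(cx)/Q(x)))^{1/2+β}. -/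
open MeasureTheory Set

lemma deriv_mono_of_convexOn {φ : ℝ → ℝ} {x₀ a b da db : ℝ}
    (hconv : ConvexOn ℝ (Ici x₀) φ) (ha : x₀ ≤ a) (hab : a < b)
    (hda : HasDerivAt φ da a) (hdb : HasDerivAt φ db b) : da ≤ db := by
  have hb : x₀ ≤ b := ha.trans hab.le
  have key1 : da ≤ (φ b - φ a) / (b - a) := by
    have ht : Filter.Tendsto (slope φ a) (nhdsWithin a (Ioi a)) (nhds da) :=
      (hasDerivAt_iff_tendsto_slope.mp hda).mono_left
        (nhdsWithin_mono a fun y hy => ne_of_gt hy)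
    refine le_of_tendsto ht ?_
    filter_upwards [Ioo_mem_nhdsGT_of_mem ⟨le_refl a, hab⟩] with y hy
    have h := hconv.secant_mono ha (mem_Ici.2 (ha.trans hy.1.le)) (mem_Ici.2 hb)
      (ne_of_gt hy.1) (ne_of_gt hab) hy.2.le
    simpa [slope_def_field] using h
  have key2 : (φ b - φ a) / (b - a) ≤ db := by
    have ht : Filter.Tendsto (slope φ b) (nhdsWithin b (Iio b)) (nhds db) :=
      (hasDerivAt_iff_tendsto_slope.mp hdb).mono_left
        (nhdsWithin_mono b fun y hy => ne_of_lt hy)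
    have h2 : slope φ b a ≤ db := by
      refine ge_of_tendsto ht ?_
      filter_upwards [Ioo_mem_nhdsLT_of_mem ⟨hab, le_refl b⟩] with y hy
      have h := hconv.secant_mono (mem_Ici.2 hb) (mem_Ici.2 ha)
        (mem_Ici.2 (ha.trans hy.1.le)) (ne_of_lt hab) (ne_of_lt hy.2) hy.1.le
      simpa [slope_def_field] using h
    rw [slope_comm, slope_def_field] at h2
    exact h2
  exact key1.trans key2

lemma g_antitone {Q f : ℝ → ℝ} {x₀ β : ℝ} (hβ : β < 1 / 2)
    (hQrange : ∀ x, x₀ ≤ x → 0 < Q x ∧ Q x ≤ 1)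
    (hderiv : ∀ x, x₀ ≤ x → HasDerivAt Q (-(f x)) x)
    (hconv : ConvexOn ℝ (Ici x₀) (fun x => Q x ^ ((1:ℝ)/2 - β)))
    {a b : ℝ} (ha : x₀ ≤ a) (hab : a ≤ b) :
    f b / Q b ^ ((1:ℝ)/2 + β) ≤ f a / Q a ^ ((1:ℝ)/2 + β) := by
  rcases eq_or_lt_of_le hab with rfl | hab
  · exact le_refl _
  have hb : x₀ ≤ b := ha.trans hab.le
  have hd : ∀ y, x₀ ≤ y → HasDerivAt (fun t => Q t ^ ((1:ℝ)/2 - β))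
      (-(f y) * ((1:ℝ)/2 - β) * Q y ^ ((1:ℝ)/2 - β - 1)) y := fun y hy =>
    (hderiv y hy).rpow_const (Or.inl (hQrange y hy).1.ne')
  have key := deriv_mono_of_convexOn hconv ha hab (hd a ha) (hd b hb)
  have he : ((1:ℝ)/2 - β - 1) = -((1:ℝ)/2 + β) := by ring
  rw [he] at key
  have hrw : ∀ y, x₀ ≤ y →
      Q y ^ (-((1:ℝ)/2 + β)) = (Q y ^ ((1:ℝ)/2 + β))⁻¹ := fun y hy =>
    Real.rpow_neg (hQrange y hy).1.le _
  rw [hrw a ha, hrw b hb] at key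
  have hpos : (0:ℝ) < (1:ℝ)/2 - β := by linarith
  have hQa := Real.rpow_pos_of_pos (hQrange a ha).1 ((1:ℝ)/2 + β)
  have hQb := Real.rpow_pos_of_pos (hQrange b hb).1 ((1:ℝ)/2 + β)
  rw [div_eq_mul_inv (f b), div_eq_mul_inv (f a)]
  nlinarith [mul_pos hQa hQb, hQa.le, hQb.le]

set_option maxHeartbeats 1000000 in
/-- Key analytic estimate from the proof of Lemma 6: under the convexity
assumption on `Q^{1/2-β}` and square integrability, for all `x ≥ x₀/c`,
`x^{2-2β} F'(x)/Q(x)^{1/2+β} ≤ C (log(Q(cx)/Q(x)))^{1/2+β}`. -/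
theorem holder_tail_estimate (Q f : ℝ → ℝ) (x₀ β c : ℝ)
    (hx₀ : 0 < x₀) (hβ0 : 0 < β) (hβ : β < 1 / 2) (hc0 : 0 < c) (hc1 : c < 1)
    (hQrange : ∀ x, x₀ ≤ x → 0 < Q x ∧ Q x ≤ 1)
    (hQanti : Antitone Q)
    (hf0 : ∀ y, 0 < y → 0 ≤ f y)
    (hderiv : ∀ x, x₀ ≤ x → HasDerivAt Q (-(f x)) x)
    (hconv : ConvexOn ℝ (Ici x₀) (fun x => Q x ^ ((1:ℝ)/2 - β)))
    (hint : IntegrableOn (fun y => y ^ 2 * f y) (Ioi (0:ℝ))) :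
    ∃ C : ℝ, ∀ x, x₀ / c ≤ x →
      x ^ (2 - 2*β) * f x / Q x ^ ((1:ℝ)/2 + β) ≤
        C * Real.log (Q (c * x) / Q x) ^ ((1:ℝ)/2 + β) := by
  set e' : ℝ := (1:ℝ)/2 - β with he'_def
  set e : ℝ := (1:ℝ)/2 + β with he_def
  have he'0 : 0 < e' := by rw [he'_def]; linarith
  have he0 : 0 < e := by rw [he_def]; linarith
  have hm_meas : Measurable (fun y => -deriv Q y) := (measurable_deriv Q).neg
  have hfm : ∀ y, x₀ ≤ y → f y = -deriv Q y := fun y hy => by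
    rw [(hderiv y hy).deriv]; ring
  have hQ_meas : Measurable Q := hQanti.measurable
  have hg_anti : ∀ a b : ℝ, x₀ ≤ a → a ≤ b →
      f b / Q b ^ e ≤ f a / Q a ^ e := fun a b ha hab =>
    g_antitone hβ hQrange hderiv hconv ha hab
  set M := ∫ y in Ioi (0:ℝ), y ^ 2 * f y with hM_def
  have hM0 : 0 ≤ M := setIntegral_nonneg measurableSet_Ioi
    (fun y hy => mul_nonneg (sq_nonneg y) (hf0 y hy))
  set D : ℝ := c ^ ((1:ℝ) - 2*β) * (1 - c) with hD_def
  have hD : 0 < D := mul_pos (Real.rpow_pos_of_pos hc0 _) (by linarith)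
  refine ⟨M ^ e' / D, fun x hx => ?_⟩
  have hx0 : 0 < x := lt_of_lt_of_le (div_pos hx₀ hc0) hx
  set a := c * x with ha_def
  have ha0 : 0 < a := mul_pos hc0 hx0
  have hax : a < x := by
    have h := mul_lt_mul_of_pos_right hc1 hx0
    simpa [ha_def] using h
  have hx₀a : x₀ ≤ a := by
    rw [ha_def]
    calc x₀ = c * (x₀ / c) := by field_simp
    _ ≤ c * x := mul_le_mul_of_nonneg_left hx hc0.le
  have hx₀x : x₀ ≤ x := hx₀a.trans hax.le
  obtain ⟨hQa0, hQa1⟩ := hQrange a hx₀a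
  obtain ⟨hQx0, hQx1⟩ := hQrange x hx₀x
  set s : Set ℝ := Ioc a x with hs_def
  have hs : MeasurableSet s := measurableSet_Ioc
  have hsvol : volume s < ⊤ := by
    rw [hs_def, Real.volume_Ioc]; exact ENNReal.ofReal_lt_top
  have hmem : ∀ y ∈ s, x₀ ≤ y ∧ 0 < y ∧ 0 < Q y ∧ Q y ≤ 1 ∧ Q x ≤ Q y := by
    intro y hy
    have h1 : x₀ ≤ y := hx₀a.trans hy.1.le
    exact ⟨h1, ha0.trans hy.1, (hQrange y h1).1, (hQrange y h1).2, hQanti hy.2⟩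
  haveI : IsFiniteMeasure (volume.restrict s) := by
    constructor
    rw [Measure.restrict_apply_univ]
    exact hsvol
  have hbint : ∀ (h : ℝ → ℝ) (K : ℝ), AEStronglyMeasurable h (volume.restrict s) →
      (∀ y ∈ s, ‖h y‖ ≤ K) → Integrable h (volume.restrict s) := by
    intro h K hmeas hbd
    refine ⟨hmeas, HasFiniteIntegral.restrict_of_bounded (C := K) hsvol ?_⟩
    filter_upwards [ae_restrict_mem hs] with y hy using hbd y hy
  set B := f a / Q a ^ e with hB_def
  have hB0 : 0 ≤ B := div_nonneg (hf0 a ha0) (Real.rpow_nonneg hQa0.le _)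
  have hfB : ∀ y ∈ s, 0 ≤ f y ∧ f y ≤ B := by
    intro y hy
    obtain ⟨h1, h2, h3, h4, _⟩ := hmem y hy
    refine ⟨hf0 y h2, ?_⟩
    have hgy : f y / Q y ^ e ≤ B := hg_anti a y hx₀a hy.1.le
    have hQe1 : Q y ^ e ≤ 1 := Real.rpow_le_one h3.le h4 he0.le
    have hQe0 : 0 < Q y ^ e := Real.rpow_pos_of_pos h3 _
    calc f y = f y / Q y ^ e * Q y ^ e := by field_simp
    _ ≤ B * 1 := mul_le_mul hgy hQe1 hQe0.le hB0
    _ = B := mul_one B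
  have hf_ae : f =ᵐ[volume.restrict s] (fun y => -deriv Q y) := by
    filter_upwards [ae_restrict_mem hs] with y hy
    exact hfm y (hmem y hy).1
  have hf_aesm : AEStronglyMeasurable f (volume.restrict s) :=
    hm_meas.aestronglyMeasurable.congr hf_ae.symm
  have hf_aem : AEMeasurable f (volume.restrict s) := hf_aesm.aemeasurable
  -- conjugate exponents
  set p : ℝ := e'⁻¹ with hp_def
  set q : ℝ := e⁻¹ with hq_def
  have he'1 : e' < 1 := by rw [he'_def]; linarith
  have hpq : p.HolderConjugate q := by
    rw [Real.holderConjugate_iff]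
    constructor
    · rw [hp_def]
      exact (one_lt_inv_iff₀).mpr ⟨he'0, he'1⟩
    · rw [hp_def, hq_def, inv_inv, inv_inv, he'_def, he_def]; ring
  -- the two Hölder factors
  set F := fun y : ℝ => (y ^ 2 * f y) ^ e' with hF_def
  set G := fun y : ℝ => (f y / Q y) ^ e with hG_def
  have hF_aesm : AEStronglyMeasurable F (volume.restrict s) := by
    refine AEMeasurable.aestronglyMeasurable ?_
    exact (Real.continuous_rpow_const he'0.le).measurable.comp_aemeasurable
      ((measurable_id.pow_const 2).aemeasurable.mul hf_aem)
  have hG_aesm : AEStronglyMeasurable G (volume.restrict s) := by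
    refine AEMeasurable.aestronglyMeasurable ?_
    exact (Real.continuous_rpow_const he0.le).measurable.comp_aemeasurable
      (hf_aem.div hQ_meas.aemeasurable)
  have hFbd : ∀ y ∈ s, 0 ≤ F y ∧ F y ≤ (x ^ 2 * B) ^ e' := by
    intro y hy
    obtain ⟨_, h2, _, _, _⟩ := hmem y hy
    have hb : 0 ≤ y ^ 2 * f y := mul_nonneg (sq_nonneg y) (hfB y hy).1
    refine ⟨Real.rpow_nonneg hb _, Real.rpow_le_rpow hb ?_ he'0.le⟩
    exact mul_le_mul (pow_le_pow_left₀ h2.le hy.2 2) (hfB y hy).2 (hfB y hy).1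
      (sq_nonneg x)
  have hGbd : ∀ y ∈ s, 0 ≤ G y ∧ G y ≤ (B / Q x) ^ e := by
    intro y hy
    obtain ⟨_, h2, h3, _, h5⟩ := hmem y hy
    have hb : 0 ≤ f y / Q y := div_nonneg (hfB y hy).1 h3.le
    refine ⟨Real.rpow_nonneg hb _, Real.rpow_le_rpow hb ?_ he0.le⟩
    exact div_le_div₀ hB0 (hfB y hy).2 hQx0 h5
  have hF_mem : MemLp F (ENNReal.ofReal p) (volume.restrict s) := by
    refine MemLp.of_bound hF_aesm ((x ^ 2 * B) ^ e') ?_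
    filter_upwards [ae_restrict_mem hs] with y hy
    rw [Real.norm_eq_abs, abs_of_nonneg (hFbd y hy).1]
    exact (hFbd y hy).2
  have hG_mem : MemLp G (ENNReal.ofReal q) (volume.restrict s) := by
    refine MemLp.of_bound hG_aesm ((B / Q x) ^ e) ?_
    filter_upwards [ae_restrict_mem hs] with y hy
    rw [Real.norm_eq_abs, abs_of_nonneg (hGbd y hy).1]
    exact (hGbd y hy).2
  have hFnn : 0 ≤ᵐ[volume.restrict s] F := by
    filter_upwards [ae_restrict_mem hs] with y hy
    exact (hFbd y hy).1
  have hGnn : 0 ≤ᵐ[volume.restrict s] G := by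
    filter_upwards [ae_restrict_mem hs] with y hy
    exact (hGbd y hy).1
  have hHolder := integral_mul_le_Lp_mul_Lq_of_nonneg hpq hFnn hGnn hF_mem hG_mem
  -- simplify the first factor
  have hFp_eq : ∫ y in s, F y ^ p = ∫ y in s, y ^ 2 * f y := by
    refine setIntegral_congr_fun hs ?_
    intro y hy
    have hb : 0 ≤ y ^ 2 * f y := mul_nonneg (sq_nonneg y) (hfB y hy).1
    simp only [hF_def]
    rw [← Real.rpow_mul hb, mul_inv_cancel₀ he'0.ne', Real.rpow_one]
  have hFp_le : ∫ y in s, y ^ 2 * f y ≤ M := by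
    rw [hM_def]
    refine setIntegral_mono_set hint ?_ ?_
    · filter_upwards [ae_restrict_mem measurableSet_Ioi] with y hy
      exact mul_nonneg (sq_nonneg y) (hf0 y hy)
    · refine HasSubset.Subset.eventuallyLE ?_
      intro y hy
      exact ha0.trans hy.1
  have hFp_nonneg : 0 ≤ ∫ y in s, y ^ 2 * f y :=
    setIntegral_nonneg hs fun y hy => mul_nonneg (sq_nonneg y) (hfB y hy).1
  -- simplify the second factor : the log
  have hGq_eq : ∫ y in s, G y ^ q = ∫ y in s, f y / Q y := by
    refine setIntegral_congr_fun hs ?_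
    intro y hy
    obtain ⟨_, _, h3, _, _⟩ := hmem y hy
    have hb : 0 ≤ f y / Q y := div_nonneg (hfB y hy).1 h3.le
    simp only [hG_def]
    rw [← Real.rpow_mul hb, mul_inv_cancel₀ he0.ne', Real.rpow_one]
  have hfq_int : IntegrableOn (fun y => f y / Q y) s := by
    refine hbint _ (B / Q x) ((hf_aem.div hQ_meas.aemeasurable).aestronglyMeasurable) ?_
    intro y hy
    obtain ⟨_, _, h3, _, h5⟩ := hmem y hy
    rw [Real.norm_eq_abs, abs_of_nonneg (div_nonneg (hfB y hy).1 h3.le)]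
    exact div_le_div₀ hB0 (hfB y hy).2 hQx0 h5
  have hFTC : ∫ y in a..x, -(f y) / Q y = Real.log (Q x) - Real.log (Q a) := by
    apply intervalIntegral.integral_eq_sub_of_hasDerivAt (f := fun t => Real.log (Q t))
    · intro y hy
      rw [uIcc_of_le hax.le] at hy
      have hy₀ : x₀ ≤ y := hx₀a.trans hy.1
      exact (hderiv y hy₀).log (hQrange y hy₀).1.ne'
    · rw [intervalIntegrable_iff_integrableOn_Ioc_of_le hax.le]
      have heq : (fun y => -(f y) / Q y) = fun y => -(f y / Q y) := by
        funext y; ring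
      rw [heq]
      exact hfq_int.neg
  set L := Real.log (Q a / Q x) with hL_def
  have hL0 : 0 ≤ L := Real.log_nonneg ((one_le_div hQx0).mpr (hQanti hax.le))
  have hlogval : ∫ y in s, f y / Q y = L := by
    have h2 : (∫ y in a..x, -(f y / Q y)) = Real.log (Q x) - Real.log (Q a) := by
      rw [show (fun y => -(f y / Q y)) = fun y => -(f y) / Q y from
        funext fun y => by ring]
      exact hFTC
    rw [intervalIntegral.integral_neg] at h2
    have h3 : ∫ y in a..x, f y / Q y = Real.log (Q a) - Real.log (Q x) := by
      linarith
    rw [intervalIntegral.integral_of_le hax.le] at h3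
    rw [hs_def, h3, hL_def, Real.log_div hQa0.ne' hQx0.ne']
  -- pointwise form of F * G and lower bound
  have hFG_eq : ∀ y ∈ s, F y * G y = y ^ ((1:ℝ) - 2*β) * (f y / Q y ^ e) := by
    intro y hy
    obtain ⟨_, h2, h3, _, _⟩ := hmem y hy
    have hfy := (hfB y hy).1
    have hfsum : f y ^ e' * f y ^ e = f y := by
      rw [← Real.rpow_add' hfy (by rw [he'_def, he_def]; norm_num),
        show e' + e = 1 from by rw [he'_def, he_def]; ring, Real.rpow_one]
    have hyp : ((y:ℝ) ^ 2) ^ e' = y ^ ((1:ℝ) - 2*β) := by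
      rw [show ((y:ℝ) ^ 2) = y ^ ((2:ℝ)) from by rw [← Real.rpow_natCast y 2]; norm_num,
        ← Real.rpow_mul h2.le, show (2:ℝ) * e' = 1 - 2*β from by rw [he'_def]; ring]
    simp only [hF_def, hG_def]
    rw [Real.mul_rpow (sq_nonneg y) hfy, Real.div_rpow hfy h3.le, hyp]
    conv_rhs => rw [← hfsum]
    ring
  have hgx_nn : 0 ≤ f x / Q x ^ e :=
    div_nonneg (hf0 x hx0) (Real.rpow_nonneg hQx0.le _)
  have h1β : (0:ℝ) ≤ 1 - 2*β := by linarith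
  have hlow_pt : ∀ y ∈ s, a ^ ((1:ℝ) - 2*β) * (f x / Q x ^ e) ≤ F y * G y := by
    intro y hy
    rw [hFG_eq y hy]
    obtain ⟨h1, h2, _, _, _⟩ := hmem y hy
    refine mul_le_mul (Real.rpow_le_rpow ha0.le hy.1.le h1β)
      (hg_anti y x h1 hy.2) hgx_nn (Real.rpow_nonneg h2.le _)
  have hFG_int : Integrable (fun y => F y * G y) (volume.restrict s) := by
    refine hbint _ ((x ^ 2 * B) ^ e' * (B / Q x) ^ e) (hF_aesm.mul hG_aesm) ?_
    intro y hy
    rw [Real.norm_eq_abs, abs_of_nonneg (mul_nonneg (hFbd y hy).1 (hGbd y hy).1)]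
    exact mul_le_mul (hFbd y hy).2 (hGbd y hy).2 (hGbd y hy).1
      (Real.rpow_nonneg (mul_nonneg (sq_nonneg x) hB0) _)
  have hlow : a ^ ((1:ℝ) - 2*β) * (f x / Q x ^ e) * (x - a) ≤
      ∫ y in s, F y * G y := by
    have h1 := setIntegral_mono_on
      ((integrableOn_const_iff).mpr (Or.inr hsvol)) hFG_int hs hlow_pt
    rw [setIntegral_const, hs_def, Real.volume_real_Ioc,
      max_eq_left (by linarith : (0:ℝ) ≤ x - a), smul_eq_mul] at h1
    calc a ^ ((1:ℝ) - 2*β) * (f x / Q x ^ e) * (x - a)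
        = (x - a) * (a ^ ((1:ℝ) - 2*β) * (f x / Q x ^ e)) := by ring
    _ ≤ ∫ y in s, F y * G y := h1
  -- assemble
  have hup : ∫ y in s, F y * G y ≤ M ^ e' * L ^ e := by
    refine le_trans hHolder ?_
    have h1p : 1 / p = e' := by rw [hp_def, one_div, inv_inv]
    have h1q : 1 / q = e := by rw [hq_def, one_div, inv_inv]
    rw [hFp_eq, hGq_eq, hlogval, h1p, h1q]
    refine mul_le_mul_of_nonneg_right ?_ (Real.rpow_nonneg hL0 _)
    exact Real.rpow_le_rpow hFp_nonneg hFp_le he'0.le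
  have hxpow : x ^ ((1:ℝ) - 2*β) * x = x ^ ((2:ℝ) - 2*β) := by
    rw [show ((2:ℝ) - 2*β) = ((1:ℝ) - 2*β) + 1 by ring, Real.rpow_add hx0,
      Real.rpow_one]
  have hLHS : a ^ ((1:ℝ) - 2*β) * (f x / Q x ^ e) * (x - a) =
      D * (x ^ ((2:ℝ) - 2*β) * (f x / Q x ^ e)) := by
    rw [ha_def, Real.mul_rpow hc0.le hx0.le, hD_def, ← hxpow]; ring
  have hchain : D * (x ^ ((2:ℝ) - 2*β) * (f x / Q x ^ e)) ≤ M ^ e' * L ^ e := by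
    rw [← hLHS]; exact le_trans hlow hup
  rw [mul_div_assoc, div_mul_eq_mul_div, le_div_iff₀ hD]
  calc x ^ (2 - 2*β) * (f x / Q x ^ e) * D
      = D * (x ^ ((2:ℝ) - 2*β) * (f x / Q x ^ e)) := by ring
  _ ≤ M ^ e' * L ^ e := hchain
end
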